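/- arXiv:2408.15804 — 6 statements merged into one kernel-verified Lean document; each statement's English description precedes it below -/
import Mathlib

section
/- Let q be a symmetric bilinear form on a finite-dimensional real vector space V, let H, D, D' ∈ V with q(H,H) > 0 and q(D,H) > 0, and suppose q is negative semidefinite on the hyperplane P_H = {v : q(H,v) = 0}. If q(D,D') = 0 and q(D,D) ≥ 0, then q(D',D') ≤ 0. Moreover, if in addition q(D',D') = 0, then for c = -q(H,D')/q(D,H) one has q(D' + cD, w) = 0 for all w ∈ V. -/
/-!
Put `c = -q(H,D')/q(D,H)` and `E = D' + c • D`. Then `q(H,E) = 0`, so `q(E,E) ≤ 0`, while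
`q(E,E) = q(D',D') + c² q(D,D) ≥ q(D',D')`. If `q(D',D') = 0` this forces `q(E,E) = 0`; a null
vector of the semidefinite form `q` on `P_H` lies in its radical by Cauchy–Schwarz, and since
`q(E,H) = 0` as well and `V = P_H + ℝ H`, `E` is orthogonal to all of `V`.
-/

namespace LinearMap

theorem eq_zero_of_ker_le_ker_of_apply_eq_zero {K M : Type*} [Field K] [AddCommGroup M]
    [Module K M] {f g : M →ₗ[K] K} (hker : ker g ≤ ker f) {H : M} (hgH : g H ≠ 0)
    (hfH : f H = 0) : f = 0 := by
  ext w
  have hmem : w - (g w / g H) • H ∈ ker g := by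
    rw [mem_ker, map_sub, map_smul, smul_eq_mul, div_mul_cancel₀ _ hgH, sub_self]
  have hf := mem_ker.mp (hker hmem)
  rwa [map_sub, map_smul, hfH, smul_zero, sub_zero] at hf

namespace BilinForm

variable {R M : Type*} [CommRing R] [LinearOrder R] [IsStrictOrderedRing R]
  [AddCommGroup M] [Module R M]

theorem apply_eq_zero_of_apply_self_eq_zero_of_nonpos {B : LinearMap.BilinForm R M}
    (hB : LinearMap.IsSymm B) {P : Submodule R M} (hP : ∀ v ∈ P, B v v ≤ 0) {x : M}
    (hx : x ∈ P) (hxx : B x x = 0) {y : M} (hy : y ∈ P) : B x y = 0 := by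
  let B' : LinearMap.BilinForm R P := -B.domRestrict₁₂ P P
  have hB'symm : LinearMap.IsSymm B' :=
    ⟨fun u v ↦ by simpa [B', domRestrict₁₂_apply] using hB.eq u v⟩
  have hB'nonneg (u : P) : 0 ≤ B' u u := by simpa [B', domRestrict₁₂_apply] using hP u u.2
  have hker : (⟨x, hx⟩ : P) ∈ ker B' :=
    (B'.apply_apply_same_eq_zero_iff hB'nonneg hB'symm).mp
      (by simp [B', domRestrict₁₂_apply, hxx])
  simpa [B', domRestrict₁₂_apply] using LinearMap.congr_fun (mem_ker.mp hker) ⟨y, hy⟩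

end BilinForm

end LinearMap

theorem hodge_index_type_lemma_general (V : Type*) [AddCommGroup V] [Module ℝ V]
    (q : V →ₗ[ℝ] V →ₗ[ℝ] ℝ) (hsymm : ∀ x y : V, q x y = q y x)
    (H D D' : V) (hH : 0 < q H H) (hDH : 0 < q D H)
    (hneg : ∀ v : V, q H v = 0 → q v v ≤ 0)
    (hDD' : q D D' = 0) (hDD : 0 ≤ q D D) :
    q D' D' ≤ 0 ∧
      (q D' D' = 0 →
        ∀ w : V, q (D' + (-(q H D') / q D H) • D) w = 0) := by
  set c : ℝ := -(q H D') / q D H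
  set E : V := D' + c • D
  have hHE : q H E = 0 := by
    simp only [E, c, map_add, map_smul, smul_eq_mul, hsymm H D]
    field_simp
    ring
  have hEE : q E E = q D' D' + c ^ 2 * q D D := by
    simp only [E, map_add, map_smul, LinearMap.add_apply, LinearMap.smul_apply, smul_eq_mul,
      hDD', hsymm D' D]
    ring
  have hEE_nonpos : q E E ≤ 0 := hneg E hHE
  have hc2 : 0 ≤ c ^ 2 * q D D := mul_nonneg (sq_nonneg c) hDD
  refine ⟨by linarith, fun hD'D' w ↦ ?_⟩
  have hker : LinearMap.ker (q H) ≤ LinearMap.ker (q E) := fun y hy ↦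
    LinearMap.BilinForm.apply_eq_zero_of_apply_self_eq_zero_of_nonpos ⟨hsymm⟩
      (P := LinearMap.ker (q H)) hneg (LinearMap.mem_ker.mpr hHE) (by linarith) hy
  have hEH : q E H = 0 := by rw [hsymm, hHE]
  exact LinearMap.congr_fun (LinearMap.eq_zero_of_ker_le_ker_of_apply_eq_zero hker hH.ne' hEH) w

/-- Abstract Hodge-index-type lemma: if `q(H,H) > 0`, `q(D,H) > 0`, `q` is negative
semidefinite on `P_H = {v : q(H,v) = 0}`, `q(D,D') = 0` and `q(D,D) ≥ 0`, then
`q(D',D') ≤ 0`; and if moreover `q(D',D') = 0`, then with `c = -q(H,D')/q(D,H)`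
the vector `D' + c•D` is `q`-orthogonal to all of `V`. -/
theorem hodge_index_type_lemma (V : Type*) [AddCommGroup V] [Module ℝ V]
    [FiniteDimensional ℝ V]
    (q : V →ₗ[ℝ] V →ₗ[ℝ] ℝ) (hsymm : ∀ x y : V, q x y = q y x)
    (H D D' : V) (hH : 0 < q H H) (hDH : 0 < q D H)
    (hneg : ∀ v : V, q H v = 0 → q v v ≤ 0)
    (hDD' : q D D' = 0) (hDD : 0 ≤ q D D) :
    q D' D' ≤ 0 ∧
      (q D' D' = 0 →
        ∀ w : V, q (D' + (-(q H D') / q D H) • D) w = 0) :=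
  hodge_index_type_lemma_general V q hsymm H D D' hH hDH hneg hDD' hDD
end

section
/- The restricted partition numbers are unimodal: for positive integers k, d, one has p(k,d,n) ≤ p(k,d,n+1) whenever 0 ≤ n < dk/2, and p(k,d,n) ≥ p(k,d,n+1) whenever dk/2 ≤ n < dk. -/
/-- `p k d n` is the number of partitions of `n` into at most `d` parts,
each part at most `k`. -/
def p (k d n : ℕ) : ℕ :=
  Finset.card (Finset.univ.filter
    (fun P : Nat.Partition n => P.parts.card ≤ d ∧ ∀ i ∈ P.parts, i ≤ k))

/-!
An `sl₂` argument. Symmetric rational functions on the box `{0,…,k}^d` supported on the tuples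
of coordinate sum `n` form a space of dimension `p(k,d,n)`: such a function is determined by its
values on sorted tuples, and sorted tuples of sum `n` are the partitions of `n` padded with zeros.
The raising and lowering operators `(U v)(f) = ∑ⱼ fⱼ v(f - eⱼ)` and
`(E v)(f) = ∑ⱼ (k - fⱼ) v(f + eⱼ)` preserve symmetry, move the support from sum `n` to `n + 1`
and back, are adjoint for the inner product weighted by `∏ⱼ C(k, fⱼ)`, and satisfy
`EU - UE = dk - 2n` on sum `n`. Hence `‖Uv‖² = ‖Ev‖² + (dk - 2n)‖v‖²`, so `U` is injective on
sum `n` when `2n < dk` and `E` is injective on sum `n + 1` when `dk < 2(n + 1)`, which compares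
the dimensions.
-/

theorem finrank_le_finrank_of_mapsTo_of_injOn {K V W : Type*} [DivisionRing K] [AddCommGroup V]
    [Module K V] [AddCommGroup W] [Module K W] {S : Submodule K V} {T : Submodule K W}
    [FiniteDimensional K T] (A : V →ₗ[K] W) (hmaps : ∀ v ∈ S, A v ∈ T)
    (hinj : ∀ v ∈ S, A v = 0 → v = 0) :
    Module.finrank K S ≤ Module.finrank K T := by
  refine LinearMap.finrank_le_finrank_of_injective (f := A.restrict hmaps) ?_
  rw [injective_iff_map_eq_zero]
  exact fun v hv => Subtype.ext (hinj v v.2 (congrArg Subtype.val hv))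

namespace Multiset

lemma filter_ne_zero_add_replicate_count (s : Multiset ℕ) :
    s.filter (· ≠ 0) + replicate (s.count 0) 0 = s := by
  rw [← filter_eq']
  simpa using filter_add_not (· ≠ 0) s

lemma filter_ne_zero_add_replicate_zero (s : Multiset ℕ) (r : ℕ) :
    (s + replicate r 0).filter (· ≠ 0) = s.filter (· ≠ 0) := by
  rw [filter_add, add_eq_left, filter_eq_nil]
  exact fun a ha => not_not.mpr (eq_of_mem_replicate ha)

end Multiset

namespace RestrictedPartition

open Finset Function

abbrev Box (k d : ℕ) := Fin d → Fin (k + 1)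

variable {k d : ℕ}

def weight (f : Box k d) : ℕ := ∑ j, (f j : ℕ)

/-- Adds `1` to the `j`-th coordinate, wrapping around from `k` to `0`. The wrap-around makes
this a permutation; the operators below only use it with coefficients that vanish at the wrap. -/
def shift (j : Fin d) : Equiv.Perm (Box k d) where
  toFun f := update f j (f j + 1)
  invFun f := update f j (f j - 1)
  left_inv f := by simp
  right_inv f := by simp

@[simp] lemma shift_apply_self (f : Box k d) (j : Fin d) : shift j f j = f j + 1 := by
  simp [shift]

@[simp] lemma shift_symm_apply_self (f : Box k d) (j : Fin d) :
    (shift j).symm f j = f j - 1 := by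
  simp [shift]

lemma shift_apply_of_ne (f : Box k d) {i j : Fin d} (h : i ≠ j) : shift j f i = f i := by
  simp [shift, h]

lemma shift_symm_apply_of_ne (f : Box k d) {i j : Fin d} (h : i ≠ j) :
    (shift j).symm f i = f i := by
  simp [shift, h]

lemma shift_symm_shift_comm (f : Box k d) {i j : Fin d} (h : i ≠ j) :
    (shift j).symm (shift i f) = shift i ((shift j).symm f) := by
  simp [shift, update_comm h.symm, h, h.symm]

lemma shift_comp_perm (f : Box k d) (σ : Equiv.Perm (Fin d)) (j : Fin d) :
    shift j (f ∘ σ) = shift (σ j) f ∘ σ := by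
  simp [shift, update_comp_equiv]

lemma shift_symm_comp_perm (f : Box k d) (σ : Equiv.Perm (Fin d)) (j : Fin d) :
    (shift j).symm (f ∘ σ) = (shift (σ j)).symm f ∘ σ := by
  simp [shift, update_comp_equiv]

lemma weight_comp_perm (f : Box k d) (σ : Equiv.Perm (Fin d)) : weight (f ∘ σ) = weight f :=
  Equiv.sum_comp σ fun j => (f j : ℕ)

lemma weight_update (f : Box k d) (j : Fin d) (a : Fin (k + 1)) :
    weight (update f j a) + f j = weight f + a := by
  have h := sum_update_of_mem (mem_univ j) (fun i => (f i : ℕ)) a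
  have h' := add_sum_erase univ (fun i => (f i : ℕ)) (mem_univ j)
  rw [← sdiff_singleton_eq_erase] at h'
  simp only [weight, apply_update (fun _ (x : Fin (k + 1)) => (x : ℕ))]
  omega

lemma weight_shift (f : Box k d) {j : Fin d} (h : f j ≠ Fin.last k) :
    weight (shift j f) = weight f + 1 := by
  have := weight_update f j (f j + 1)
  rw [Fin.val_add_one, if_neg h] at this
  simp only [shift, Equiv.coe_fn_mk]
  omega

lemma weight_shift_symm (f : Box k d) {j : Fin d} (h : f j ≠ 0) :
    weight ((shift j).symm f) + 1 = weight f := by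
  have := weight_update f j (f j - 1)
  rw [Fin.coe_sub_one, if_neg h] at this
  have : (f j : ℕ) ≠ 0 := Fin.val_ne_iff.mpr h
  simp only [shift, Equiv.coe_fn_symm_mk]
  omega

variable (k d) in
def raising : (Box k d → ℚ) →ₗ[ℚ] (Box k d → ℚ) where
  toFun v f := ∑ j, ((f j : ℕ) : ℚ) * v ((shift j).symm f)
  map_add' v u := by ext f; simp [mul_add, sum_add_distrib]
  map_smul' c v := by ext f; simp [mul_sum, mul_left_comm]

variable (k d) in
def lowering : (Box k d → ℚ) →ₗ[ℚ] (Box k d → ℚ) where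
  toFun v f := ∑ j, ((k : ℚ) - (f j : ℕ)) * v (shift j f)
  map_add' v u := by ext f; simp [mul_add, sum_add_distrib]
  map_smul' c v := by ext f; simp [mul_sum, mul_left_comm]

lemma raising_apply (v : Box k d → ℚ) (f : Box k d) :
    raising k d v f = ∑ j, ((f j : ℕ) : ℚ) * v ((shift j).symm f) := rfl

lemma lowering_apply (v : Box k d → ℚ) (f : Box k d) :
    lowering k d v f = ∑ j, ((k : ℚ) - (f j : ℕ)) * v (shift j f) := rfl

def mass (f : Box k d) : ℚ := ∏ j, (k.choose (f j) : ℚ)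

def form (v u : Box k d → ℚ) : ℚ := ∑ f, mass f * v f * u f

lemma choose_val_add_one_mul (a : Fin (k + 1)) :
    (k.choose (a + 1 : Fin (k + 1)) : ℚ) * ((a + 1 : Fin (k + 1)) : ℕ)
      = k.choose a * (k - a) := by
  rw [Fin.val_add_one]
  split_ifs with h
  · simp [h]
  · rw [← Nat.cast_sub (Fin.is_le a)]
    exact_mod_cast Nat.choose_succ_right_eq k a

lemma mass_update (f : Box k d) (j : Fin d) (a : Fin (k + 1)) :
    mass (update f j a) = k.choose a * ∏ i ∈ univ \ {j}, (k.choose (f i) : ℚ) := by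
  simp only [mass, apply_update (fun _ (x : Fin (k + 1)) => (k.choose x : ℚ))]
  exact prod_update_of_mem (mem_univ j) _ _

lemma mass_shift_mul (f : Box k d) (j : Fin d) :
    mass (shift j f) * ((shift j f j : ℕ) : ℚ) = mass f * (k - (f j : ℕ)) := by
  rw [shift_apply_self, show shift j f = update f j (f j + 1) from rfl, mass_update,
    ← update_eq_self j f, mass_update, update_eq_self]
  linear_combination (∏ i ∈ univ \ {j}, (k.choose (f i) : ℚ)) * choose_val_add_one_mul (f j)

lemma form_raising (v u : Box k d → ℚ) : form (raising k d v) u = form v (lowering k d u) := by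
  simp only [form, raising_apply, lowering_apply, mul_sum, sum_mul]
  rw [sum_comm]
  conv_rhs => rw [sum_comm]
  refine sum_congr rfl fun j _ => ?_
  rw [← Equiv.sum_comp (shift j)]
  refine sum_congr rfl fun g _ => ?_
  rw [Equiv.symm_apply_apply]
  linear_combination (v g * u (shift j g)) * mass_shift_mul g j

lemma form_comm (v u : Box k d → ℚ) : form v u = form u v :=
  sum_congr rfl fun f _ => by ring

lemma mass_pos (f : Box k d) : 0 < mass f :=
  prod_pos fun j _ => Nat.cast_pos.mpr (Nat.choose_pos (Fin.is_le (f j)))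

lemma form_self_nonneg (v : Box k d → ℚ) : 0 ≤ form v v :=
  sum_nonneg fun f _ => by rw [mul_assoc]; exact mul_nonneg (mass_pos f).le (mul_self_nonneg _)

lemma eq_zero_of_form_self_eq_zero {v : Box k d → ℚ} (h : form v v = 0) : v = 0 := by
  ext f
  have hf := (sum_eq_zero_iff_of_nonneg fun g _ => by
    rw [mul_assoc]; exact mul_nonneg (mass_pos g).le (mul_self_nonneg (v g))).mp h f (mem_univ f)
  rw [mul_assoc, mul_eq_zero, mul_self_eq_zero] at hf
  exact hf.resolve_left (mass_pos f).ne'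

lemma commutator_coeff (a : Fin (k + 1)) :
    ((k : ℚ) - a) * ((a + 1 : Fin (k + 1)) : ℕ) - a * (k - ((a - 1 : Fin (k + 1)) : ℕ))
      = k - 2 * a := by
  have ha : (a : ℕ) ≤ k := Fin.is_le a
  rw [Fin.val_add_one, Fin.coe_sub_one]
  split_ifs with hlast hzero hzero <;> simp only [Fin.ext_iff, Fin.val_last, Fin.val_zero] at hlast hzero
  · simp [← hlast, hzero]
  · obtain ⟨m, rfl⟩ : ∃ m, k = m + 1 := ⟨k - 1, by omega⟩
    rw [hlast, Nat.add_sub_cancel]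
    push_cast
    ring
  · simp [hzero]
  · push_cast [Nat.one_le_iff_ne_zero.mpr hzero]
    ring

lemma lowering_raising_sub_raising_lowering (v : Box k d → ℚ) (f : Box k d) :
    lowering k d (raising k d v) f - raising k d (lowering k d v) f
      = (d * k - 2 * weight f) * v f := by
  simp only [lowering_apply, raising_apply, mul_sum]
  rw [sum_comm (s := univ) (t := univ) (f := fun j i => ((f j : ℕ) : ℚ) * _)]
  simp only [← sum_sub_distrib]
  calc _ = ∑ i : Fin d, ((k : ℚ) - 2 * (f i : ℕ)) * v f := by
        refine sum_congr rfl fun i _ => ?_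
        rw [sum_eq_single i]
        · simp only [shift_apply_self, shift_symm_apply_self, Equiv.symm_apply_apply,
            Equiv.apply_symm_apply]
          linear_combination v f * commutator_coeff (f i)
        · intro j _ hji
          rw [shift_apply_of_ne f hji, shift_symm_apply_of_ne f hji.symm,
            shift_symm_shift_comm f hji.symm]
          ring
        · simp
    _ = _ := by
        simp only [← sum_mul, sum_sub_distrib, weight]
        simp [mul_sum]

variable (k d) in
def weightSpace (n : ℕ) : Submodule ℚ (Box k d → ℚ) where
  carrier := {v | ∀ f, weight f ≠ n → v f = 0}
  add_mem' hv hu f hf := by simp [hv f hf, hu f hf]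
  zero_mem' _ _ := rfl
  smul_mem' c v hv f hf := by simp [hv f hf]

variable (k d) in
def symmetricSpace : Submodule ℚ (Box k d → ℚ) where
  carrier := {v | ∀ (σ : Equiv.Perm (Fin d)) f, v (f ∘ σ) = v f}
  add_mem' hv hu σ f := by simp [hv σ f, hu σ f]
  zero_mem' _ _ := rfl
  smul_mem' c v hv σ f := by simp [hv σ f]

lemma raising_mem_weightSpace {n : ℕ} {v : Box k d → ℚ} (hv : v ∈ weightSpace k d n) :
    raising k d v ∈ weightSpace k d (n + 1) := by
  intro f hf
  rw [raising_apply]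
  refine sum_eq_zero fun j _ => ?_
  by_cases h : f j = 0
  · simp [h]
  · rw [hv _ (by have := weight_shift_symm f h; omega), mul_zero]

lemma lowering_mem_weightSpace {n : ℕ} {v : Box k d → ℚ}
    (hv : v ∈ weightSpace k d (n + 1)) : lowering k d v ∈ weightSpace k d n := by
  intro f hf
  rw [lowering_apply]
  refine sum_eq_zero fun j _ => ?_
  by_cases h : f j = Fin.last k
  · simp [h]
  · rw [hv _ (by have := weight_shift f h; omega), mul_zero]

lemma raising_mem_symmetricSpace {v : Box k d → ℚ} (hv : v ∈ symmetricSpace k d) :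
    raising k d v ∈ symmetricSpace k d := by
  intro σ f
  simp only [raising_apply, shift_symm_comp_perm, hv σ]
  exact Equiv.sum_comp σ fun j => ((f j : ℕ) : ℚ) * v ((shift j).symm f)

lemma lowering_mem_symmetricSpace {v : Box k d → ℚ} (hv : v ∈ symmetricSpace k d) :
    lowering k d v ∈ symmetricSpace k d := by
  intro σ f
  simp only [lowering_apply, shift_comp_perm, hv σ]
  exact Equiv.sum_comp σ fun j => ((k : ℚ) - (f j : ℕ)) * v (shift j f)

lemma form_raising_self {n : ℕ} {v : Box k d → ℚ} (hv : v ∈ weightSpace k d n) :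
    form (raising k d v) (raising k d v)
      = form (lowering k d v) (lowering k d v) + (d * k - 2 * n) * form v v := by
  have hcomm : form v (lowering k d (raising k d v))
      = form v (raising k d (lowering k d v)) + (d * k - 2 * n) * form v v := by
    simp only [form, mul_sum, ← sum_add_distrib]
    refine sum_congr rfl fun f _ => ?_
    by_cases hf : weight f = n
    · rw [← hf]
      linear_combination mass f * v f * lowering_raising_sub_raising_lowering v f
    · simp [hv f hf]
  rw [form_raising, hcomm, form_comm v, form_raising, form_comm]

lemma eq_zero_of_raising_eq_zero {n : ℕ} (hn : 2 * n < d * k) {v : Box k d → ℚ}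
    (hv : v ∈ weightSpace k d n) (h : raising k d v = 0) : v = 0 := by
  have key := form_raising_self hv
  have hpos : (0 : ℚ) < d * k - 2 * n := by
    rw [sub_pos]; exact_mod_cast hn
  rw [h, show form (0 : Box k d → ℚ) 0 = 0 by simp [form]] at key
  refine eq_zero_of_form_self_eq_zero (le_antisymm ?_ (form_self_nonneg v))
  nlinarith [form_self_nonneg (lowering k d v)]

lemma eq_zero_of_lowering_eq_zero {n : ℕ} (hn : d * k < 2 * n) {v : Box k d → ℚ}
    (hv : v ∈ weightSpace k d n) (h : lowering k d v = 0) : v = 0 := by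
  have key := form_raising_self hv
  have hneg : (d * k - 2 * n : ℚ) < 0 := by
    rw [sub_neg]; exact_mod_cast hn
  rw [h, show form (0 : Box k d → ℚ) 0 = 0 by simp [form]] at key
  refine eq_zero_of_form_self_eq_zero (le_antisymm ?_ (form_self_nonneg v))
  nlinarith [form_self_nonneg (raising k d v)]

variable (k d) in
def Sorted (n : ℕ) : Type := {f : Box k d // weight f = n ∧ Monotone f}

def Sorted.ofBox {n : ℕ} (f : Box k d) (h : weight f = n) : Sorted k d n :=
  ⟨f ∘ Tuple.sort f, (weight_comp_perm f _).trans h, Tuple.monotone_sort f⟩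

lemma Sorted.ofBox_comp_perm {n : ℕ} (f : Box k d) (σ : Equiv.Perm (Fin d))
    (h : weight (f ∘ σ) = n) :
    Sorted.ofBox (f ∘ σ) h = Sorted.ofBox f ((weight_comp_perm f σ).symm.trans h) :=
  Subtype.ext Tuple.comp_perm_comp_sort_eq_comp_sort

lemma Sorted.ofBox_val {n : ℕ} (q : Sorted k d n) : Sorted.ofBox q.1 q.2.1 = q :=
  Subtype.ext <| show q.1 ∘ Tuple.sort q.1 = q.1 by
    rw [Tuple.sort_eq_refl_iff_monotone.mpr q.2.2]
    rfl

noncomputable def symmetrize {n : ℕ} (u : Sorted k d n → ℚ) (f : Box k d) : ℚ :=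
  if h : weight f = n then u (Sorted.ofBox f h) else 0

lemma symmetrize_mem {n : ℕ} (u : Sorted k d n → ℚ) :
    symmetrize u ∈ weightSpace k d n ⊓ symmetricSpace k d := by
  refine ⟨fun f hf => dif_neg hf, fun σ f => ?_⟩
  by_cases h : weight f = n
  · rw [symmetrize, dif_pos ((weight_comp_perm f σ).trans h), Sorted.ofBox_comp_perm,
      symmetrize, dif_pos h]
  · rw [symmetrize, dif_neg (by rwa [weight_comp_perm]), symmetrize, dif_neg h]

noncomputable def symWeightSpaceEquiv (n : ℕ) :
    ↥(weightSpace k d n ⊓ symmetricSpace k d) ≃ₗ[ℚ] (Sorted k d n → ℚ) where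
  toFun v q := v.1 q.1
  map_add' _ _ := rfl
  map_smul' _ _ := rfl
  invFun u := ⟨symmetrize u, symmetrize_mem u⟩
  left_inv := by
    rintro ⟨v, hw, hs⟩
    ext f
    by_cases h : weight f = n
    · exact (dif_pos h).trans (hs _ f)
    · exact (dif_neg h).trans (hw f h).symm
  right_inv u := by
    ext q
    exact (dif_pos q.2.1).trans (congrArg u (Sorted.ofBox_val q))

variable (k d) in
def BoundedMultiset (n : ℕ) : Type :=
  {m : Multiset ℕ // Multiset.card m = d ∧ m.sum = n ∧ ∀ x ∈ m, x ≤ k}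

variable (k d) in
abbrev BoundedPartition (n : ℕ) : Type :=
  {P : Nat.Partition n // P.parts.card ≤ d ∧ ∀ i ∈ P.parts, i ≤ k}

def Sorted.toBoundedMultiset {n : ℕ} (q : Sorted k d n) : BoundedMultiset k d n :=
  ⟨List.ofFn fun j => (q.1 j : ℕ), by simp, by simpa [List.sum_ofFn, weight] using q.2.1,
    by simpa [List.mem_ofFn] using fun j => Fin.is_le (q.1 j)⟩

lemma Sorted.toBoundedMultiset_bijective (n : ℕ) :
    Bijective (Sorted.toBoundedMultiset : Sorted k d n → BoundedMultiset k d n) := by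
  constructor
  · intro q q' h
    have hperm := Multiset.coe_eq_coe.mp (congrArg Subtype.val h)
    have := hperm.eq_of_pairwise'
      (Fin.val_strictMono.monotone.comp q.2.2).sortedLE_ofFn.pairwise
      (Fin.val_strictMono.monotone.comp q'.2.2).sortedLE_ofFn.pairwise
    exact Subtype.ext (funext fun j => Fin.ext (congrFun (List.ofFn_injective this) j))
  · rintro ⟨m, hcard, hsum, hle⟩
    obtain ⟨l, hsorted, rfl⟩ :
        ∃ l : List ℕ, l.Pairwise (· ≤ ·) ∧ (l : Multiset ℕ) = m :=
      ⟨m.sort (· ≤ ·), m.pairwise_sort _, m.sort_eq _⟩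
    rw [Multiset.coe_card] at hcard
    subst hcard
    let f : Box k l.length := fun j => ⟨l[j], Nat.lt_succ_of_le (hle _ (List.getElem_mem _))⟩
    have hf : (List.ofFn fun j => (f j : ℕ)) = l := List.ofFn_getElem
    refine ⟨⟨f, ?_, fun i j hij => hsorted.rel_get_of_le hij⟩,
      Subtype.ext (congrArg ((↑) : List ℕ → Multiset ℕ) hf)⟩
    rw [weight, ← List.sum_ofFn, hf, ← hsum, Multiset.sum_coe]

def BoundedPartition.equivBoundedMultiset (n : ℕ) :
    BoundedPartition k d n ≃ BoundedMultiset k d n where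
  toFun P := ⟨P.1.parts + Multiset.replicate (d - Multiset.card P.1.parts) 0,
    by simp [P.2.1], by simp [P.1.parts_sum],
    fun x hx => (Multiset.mem_add.mp hx).elim (P.2.2 x) fun h => by
      simp [Multiset.eq_of_mem_replicate h]⟩
  invFun m := ⟨⟨m.1.filter (· ≠ 0),
      fun hi => Nat.pos_of_ne_zero (Multiset.mem_filter.mp hi).2,
      by simpa [← m.2.2.1] using
        congrArg Multiset.sum (Multiset.filter_ne_zero_add_replicate_count m.1)⟩,
    m.2.1 ▸ Multiset.card_le_card (Multiset.filter_le _ _),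
    fun i hi => m.2.2.2 i (Multiset.mem_of_mem_filter hi)⟩
  left_inv P := by
    refine Subtype.ext (Nat.Partition.ext ?_)
    simp only [Multiset.filter_ne_zero_add_replicate_zero]
    exact Multiset.filter_eq_self.mpr fun a ha => (P.1.parts_pos ha).ne'
  right_inv := by
    rintro ⟨m, hcard, -⟩
    refine Subtype.ext (?_ : m.filter (· ≠ 0)
      + Multiset.replicate (d - Multiset.card (m.filter (· ≠ 0))) 0 = m)
    have hcount := congrArg Multiset.card (Multiset.filter_ne_zero_add_replicate_count m)
    rw [Multiset.card_add, Multiset.card_replicate, hcard] at hcount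
    rw [show d - _ = m.count 0 by omega]
    exact Multiset.filter_ne_zero_add_replicate_count m

lemma finrank_symWeightSpace (n : ℕ) :
    Module.finrank ℚ ↥(weightSpace k d n ⊓ symmetricSpace k d) = p k d n := by
  let e : Sorted k d n ≃ BoundedPartition k d n :=
    (Equiv.ofBijective _ (Sorted.toBoundedMultiset_bijective n)).trans
      (BoundedPartition.equivBoundedMultiset n).symm
  rw [(symWeightSpaceEquiv n).finrank_eq, ← (LinearEquiv.funCongrLeft ℚ ℚ e).finrank_eq,
    Module.finrank_fintype_fun_eq_card, p, Fintype.card_subtype]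

end RestrictedPartition

open RestrictedPartition

theorem p_unimodal_general (k d : ℕ) :
    (∀ n : ℕ, 2 * n < d * k → p k d n ≤ p k d (n + 1)) ∧
    (∀ n : ℕ, d * k ≤ 2 * n → n < d * k → p k d (n + 1) ≤ p k d n) := by
  refine ⟨fun n hn => ?_, fun n hn _ => ?_⟩
  · rw [← finrank_symWeightSpace, ← finrank_symWeightSpace]
    exact finrank_le_finrank_of_mapsTo_of_injOn (raising k d)
      (fun v hv => ⟨raising_mem_weightSpace hv.1, raising_mem_symmetricSpace hv.2⟩)
      (fun v hv => eq_zero_of_raising_eq_zero hn hv.1)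
  · rw [← finrank_symWeightSpace, ← finrank_symWeightSpace]
    exact finrank_le_finrank_of_mapsTo_of_injOn (lowering k d)
      (fun v hv => ⟨lowering_mem_weightSpace hv.1, lowering_mem_symmetricSpace hv.2⟩)
      (fun v hv => eq_zero_of_lowering_eq_zero (by omega) hv.1)

/-- Unimodality of restricted partition numbers. -/
theorem p_unimodal (k d : ℕ) (hk : 0 < k) (hd : 0 < d) :
    (∀ n : ℕ, 2 * n < d * k → p k d n ≤ p k d (n + 1)) ∧
    (∀ n : ℕ, d * k ≤ 2 * n → n < d * k → p k d (n + 1) ≤ p k d n) :=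
  p_unimodal_general k d
end

section
/- Let V be a finite-dimensional representation of sl₂(ℂ) with standard generators H, X, Y, and let V_λ denote the λ-eigenspace of H. Then for every integer λ > 0, the iterated map Y^λ : V_λ → V_{−λ} is a linear isomorphism. -/
/-!
Injectivity of `f ^ l` on the `l`-eigenspace of `h` passes to extensions: if it holds on a
subrepresentation `N` and on `M ⧸ N`, it holds on `M`. A nonzero finite-dimensional
representation contains the string `m, f m, f² m, …` of a primitive vector `m`, whose weight is
some `n ∈ ℕ`; on this string the `l`-eigenvectors are the multiples of the single `fⁱ m` with
`n = 2i + l`, and `f ^ l` sends it to `f^(i+l) m ≠ 0`. Induction on the dimension gives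
injectivity; the symmetry `(h, e, f) ↦ (-h, f, e)` gives injectivity of `e ^ l` on the
`-l`-eigenspace, and comparing dimensions makes `f ^ l` bijective.
-/

open Module LieModule Set Submodule

theorem LinearMap.bijOn_of_disjoint_ker {K V W : Type*} [Field K] [AddCommGroup V] [Module K V]
    [AddCommGroup W] [Module K W] [FiniteDimensional K V] [FiniteDimensional K W]
    {p : Submodule K V} {q : Submodule K W} {φ : V →ₗ[K] W} {ψ : W →ₗ[K] V}
    (hφ : MapsTo φ p q) (hψ : MapsTo ψ q p) (hφp : Disjoint p (ker φ)) (hψq : Disjoint q (ker ψ)) :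
    BijOn φ p q := by
  have hφi := (injective_restrict_iff fun _ hx ↦ hφ hx).mpr hφp
  have hψi := (injective_restrict_iff fun _ hx ↦ hψ hx).mpr hψq
  have hrank : finrank K p = finrank K q :=
    (finrank_le_finrank_of_injective hφi).antisymm (finrank_le_finrank_of_injective hψi)
  have hφs := (injective_iff_surjective_of_finrank_eq_finrank hrank).mp hφi
  refine ⟨hφ, disjoint_ker_iff_injOn.mp hφp, fun w hw ↦ ?_⟩
  obtain ⟨v, hv⟩ := hφs ⟨w, hw⟩
  exact ⟨v, v.2, congrArg Subtype.val hv⟩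

theorem Module.End.eigenspace_neg {R M : Type*} [CommRing R] [AddCommGroup M] [Module R M]
    (f : End R M) (μ : R) : (-f).eigenspace μ = f.eigenspace (-μ) := by
  ext v
  simp only [mem_eigenspace_iff, LinearMap.neg_apply, neg_eq_iff_eq_neg, neg_smul]

theorem Module.End.mem_span_image_of_mem_eigenspace {K M ι : Type*} [Field K] [AddCommGroup M]
    [Module K M] {f : End K M} {g : ι → M} {ν : ι → K} (hg : ∀ i, g i ∈ f.eigenspace (ν i))
    {μ : K} {v : M} (hv : v ∈ span K (range g)) (hμ : v ∈ f.eigenspace μ) :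
    v ∈ span K (g '' {i | ν i = μ}) := by
  rw [← image_univ, ← union_compl_self {i | ν i = μ}, image_union, span_union,
    mem_sup] at hv
  obtain ⟨a, ha, b, hb, rfl⟩ := hv
  have ha' : a ∈ f.eigenspace μ := by
    refine span_le.mpr ?_ ha
    rintro _ ⟨i, hi, rfl⟩
    exact hi ▸ hg i
  have hb' : b ∈ ⨆ ν' ∈ ({μ}ᶜ : Set K), f.eigenspace ν' := by
    refine span_le.mpr ?_ hb
    rintro _ ⟨i, hi, rfl⟩
    exact mem_iSup_of_mem (ν i) (mem_iSup_of_mem hi (hg i))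
  have hb0 : b = 0 := by
    refine (f.eigenspaces_iSupIndep.disjoint_biSup (x := μ) (by simp)).le_bot ⟨?_, hb'⟩
    simpa using sub_mem hμ ha'
  simpa [hb0] using ha

namespace IsSl2Triple

variable {K L M : Type*} [Field K] [LieRing L] [LieAlgebra K L]
  [AddCommGroup M] [Module K M] [LieRingModule L M] [LieModule K L M] {h e f : L}

theorem mapsTo_pow_toEnd_e (t : IsSl2Triple h e f) (μ : K) (k : ℕ) :
    MapsTo (toEnd K L M e ^ k) ((toEnd K L M h).eigenspace μ)
      ((toEnd K L M h).eigenspace (μ + 2 * k)) :=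
  fun _ hv ↦ End.mem_eigenspace_iff.mpr (t.lie_h_pow_toEnd_e (End.mem_eigenspace_iff.mp hv) k)

namespace HasPrimitiveVectorWith

variable {t : IsSl2Triple h e f} {m : M} {μ : K}

theorem lie_mem_span_pow_toEnd_f (P : t.HasPrimitiveVectorWith m μ) {x : L}
    (hx : x ∈ t.toLieSubalgebra K) {v : M}
    (hv : v ∈ span K (range fun i : ℕ ↦ (toEnd K L M f ^ i) m)) :
    ⁅x, v⁆ ∈ span K (range fun i : ℕ ↦ (toEnd K L M f ^ i) m) := by
  set S := span K (range fun i : ℕ ↦ (toEnd K L M f ^ i) m)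
  have mem (i : ℕ) : (toEnd K L M f ^ i) m ∈ S := subset_span (mem_range_self i)
  have invariant (y : L) (hy : ∀ i : ℕ, ⁅y, (toEnd K L M f ^ i) m⁆ ∈ S) : ⁅y, v⁆ ∈ S :=
    span_le (p := S.comap (toEnd K L M y)).mpr (range_subset_iff.mpr hy) hv
  have he : ⁅e, v⁆ ∈ S := invariant e fun i ↦ by
    cases i with
    | zero => simp [P.lie_e]
    | succ i => rw [P.lie_e_pow_succ_toEnd_f]; exact S.smul_mem _ (mem i)
  have hf : ⁅f, v⁆ ∈ S := invariant f fun i ↦ by rw [P.lie_f_pow_toEnd_f]; exact mem (i + 1)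
  have hh : ⁅h, v⁆ ∈ S := invariant h fun i ↦ by
    rw [P.lie_h_pow_toEnd_f]; exact S.smul_mem _ (mem i)
  obtain ⟨a, b, c, rfl⟩ := mem_toLieSubalgebra_iff.mp hx
  rw [t.lie_e_f, add_lie, add_lie, smul_lie, smul_lie, smul_lie]
  exact add_mem (add_mem (S.smul_mem a he) (S.smul_mem b hf)) (S.smul_mem c hh)

def stringSubmodule (P : t.HasPrimitiveVectorWith m μ) (ht : t.toLieSubalgebra K = ⊤) :
    LieSubmodule K L M where
  toSubmodule := span K (range fun i : ℕ ↦ (toEnd K L M f ^ i) m)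
  lie_mem hv := P.lie_mem_span_pow_toEnd_f (ht ▸ LieSubalgebra.mem_top _) hv

theorem eq_zero_of_mem_span_of_pow_toEnd_f_eq_zero [CharZero K] {n : ℕ}
    (P : t.HasPrimitiveVectorWith m (n : K)) {l : ℕ} {v : M}
    (hvS : v ∈ span K (range fun i : ℕ ↦ (toEnd K L M f ^ i) m))
    (hv : v ∈ (toEnd K L M h).eigenspace (l : K)) (hfv : (toEnd K L M f ^ l) v = 0) : v = 0 := by
  have hv_span := End.mem_span_image_of_mem_eigenspace (ν := fun i : ℕ ↦ (n : K) - 2 * i)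
    (fun i ↦ End.mem_eigenspace_iff.mpr (P.lie_h_pow_toEnd_f i)) hvS hv
  have weight_eq {i : ℕ} (hi : (n : K) - 2 * i = l) : n = 2 * i + l := by
    exact_mod_cast (sub_eq_iff_eq_add.mp hi).trans (add_comm _ _)
  have hsub : {i : ℕ | (n : K) - 2 * i = l}.Subsingleton := fun i hi j hj ↦ by
    have := weight_eq hi; have := weight_eq hj; omega
  rcases hsub.eq_empty_or_singleton with hA | ⟨i, hA⟩
  · rwa [hA, image_empty, span_empty, mem_bot] at hv_span
  rw [hA, image_singleton] at hv_span
  obtain ⟨c, rfl⟩ := mem_span_singleton.mp hv_span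
  have hi := weight_eq (hA ▸ mem_singleton i : i ∈ {i : ℕ | (n : K) - 2 * i = l})
  rw [map_smul, ← End.mul_apply, ← pow_add] at hfv
  rw [(smul_eq_zero.mp hfv).resolve_right (P.pow_toEnd_f_ne_zero_of_eq_nat rfl (by omega)),
    zero_smul]

end HasPrimitiveVectorWith

variable [CharZero K]

theorem disjoint_eigenspace_ker_of_toLieSubalgebra_eq_top [IsAlgClosed K] [FiniteDimensional K M]
    (t : IsSl2Triple h e f) (ht : t.toLieSubalgebra K = ⊤) (l : ℕ) :
    Disjoint ((toEnd K L M h).eigenspace (l : K)) (LinearMap.ker (toEnd K L M f ^ l)) := by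
  induction hd : finrank K M using Nat.strong_induction_on generalizing M with
  | _ d ih =>
  rcases subsingleton_or_nontrivial M with _ | _
  · simp [eq_bot_of_subsingleton]
  obtain ⟨μ, m, hm, P⟩ := t.exists_hasPrimitiveVectorWith (R := K) (M := M)
  obtain ⟨n, rfl⟩ := P.exists_nat
  set N := P.stringSubmodule ht
  have hN : finrank K (M ⧸ N) < d := by
    have hpos : 0 < finrank K (N : Submodule K M) := finrank_pos_iff_exists_ne_zero.mpr
      ⟨⟨m, subset_span ⟨0, by simp⟩⟩, fun h0 ↦ hm (congrArg Subtype.val h0)⟩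
    have := (N : Submodule K M).finrank_quotient_add_finrank
    change finrank K (M ⧸ (N : Submodule K M)) < d
    omega
  refine LinearMap.disjoint_ker.mpr fun v hv hfv ↦ ?_
  have hvN : v ∈ N := by
    rw [← LieSubmodule.Quotient.mk_eq_zero]
    refine LinearMap.disjoint_ker.mp (ih _ hN (M := M ⧸ N) rfl) _ ?_ ?_
    · simp only [End.mem_eigenspace_iff, toEnd_apply_apply] at hv ⊢
      rw [← LieModuleHom.map_lie, hv, map_smul]
    · rw [toEnd_pow_apply_map, hfv, map_zero]
  exact P.eq_zero_of_mem_span_of_pow_toEnd_f_eq_zero hvN hv hfv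

theorem disjoint_eigenspace_ker_pow_toEnd_f [IsAlgClosed K] [FiniteDimensional K M]
    (t : IsSl2Triple h e f) (l : ℕ) :
    Disjoint ((toEnd K L M h).eigenspace (l : K)) (LinearMap.ker (toEnd K L M f ^ l)) := by
  -- The string of a primitive vector is only stable under the span of the triple.
  let L' := t.toLieSubalgebra K
  have mem (x : L) (hx : x ∈ ({e, f, h} : Set L)) : x ∈ L' := subset_span hx
  have t' : IsSl2Triple (⟨h, mem h (by simp)⟩ : L') ⟨e, mem e (by simp)⟩ ⟨f, mem f (by simp)⟩ :=
    { h_ne_zero := fun h0 ↦ t.h_ne_zero (congrArg Subtype.val h0)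
      lie_e_f := Subtype.ext t.lie_e_f
      lie_h_e_nsmul := Subtype.ext t.lie_h_e_nsmul
      lie_h_f_nsmul := Subtype.ext t.lie_h_f_nsmul }
  have ht' : t'.toLieSubalgebra K = ⊤ := by
    refine eq_top_iff.mpr fun x _ ↦ mem_toLieSubalgebra_iff.mpr ?_
    obtain ⟨a, b, c, hx⟩ := mem_toLieSubalgebra_iff.mp x.2
    exact ⟨a, b, c, Subtype.ext hx⟩
  exact t'.disjoint_eigenspace_ker_of_toLieSubalgebra_eq_top ht' l

theorem bijOn_pow_toEnd_f [IsAlgClosed K] [FiniteDimensional K M] (t : IsSl2Triple h e f)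
    (l : ℕ) : BijOn (toEnd K L M f ^ l) ((toEnd K L M h).eigenspace (l : K))
      ((toEnd K L M h).eigenspace (-(l : K))) := by
  have eigenspace_neg_h (μ : K) :
      (toEnd K L M (-h)).eigenspace μ = (toEnd K L M h).eigenspace (-μ) := by
    rw [map_neg, Module.End.eigenspace_neg]
  refine LinearMap.bijOn_of_disjoint_ker (ψ := toEnd K L M e ^ l) ?_ ?_
    (t.disjoint_eigenspace_ker_pow_toEnd_f l) ?_
  · have := t.symm.mapsTo_pow_toEnd_e (M := M) (-(l : K)) l
    rwa [eigenspace_neg_h, eigenspace_neg_h, neg_neg, show -(-(l : K) + 2 * l) = -l by ring] at this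
  · have := t.mapsTo_pow_toEnd_e (M := M) (-(l : K)) l
    rwa [show -(l : K) + 2 * l = l by ring] at this
  · have := t.symm.disjoint_eigenspace_ker_pow_toEnd_f (K := K) (M := M) l
    rwa [eigenspace_neg_h] at this

end IsSl2Triple

attribute [local instance] LieRing.ofAssociativeRing

theorem IsSl2Triple.of_commutators {K A : Type*} [Field K] [Ring A] [Algebra K A] {h e f : A}
    (hh : h ≠ 0) (hhe : h * e - e * h = (2 : K) • e) (hhf : h * f - f * h = (-2 : K) • f)
    (hef : e * f - f * e = h) : IsSl2Triple h e f where
  h_ne_zero := hh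
  lie_e_f := by rw [Ring.lie_def, hef]
  lie_h_e_nsmul := by rw [Ring.lie_def, hhe, ofNat_smul_eq_nsmul]
  lie_h_f_nsmul := by rw [Ring.lie_def, hhf, neg_smul, ofNat_smul_eq_nsmul]

/-- For a finite-dimensional representation of sl₂(ℂ) (given by operators H, X, Y
with the standard commutation relations), for every integer λ > 0 the map
Y^λ : V_λ → V_{−λ} is a linear isomorphism (a bijection), where V_λ is the
λ-eigenspace of H. -/
theorem sl2_Y_pow_bijective (V : Type*) [AddCommGroup V] [Module ℂ V]
    [FiniteDimensional ℂ V]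
    (H X Y : Module.End ℂ V)
    (hHX : H * X - X * H = (2 : ℂ) • X)
    (hHY : H * Y - Y * H = (-2 : ℂ) • Y)
    (hXY : X * Y - Y * X = H)
    (l : ℕ) (hl : 0 < l) :
    Set.BijOn (Y ^ l) (Module.End.eigenspace H (l : ℂ) : Set V)
      (Module.End.eigenspace H (-(l : ℂ)) : Set V) := by
  rcases eq_or_ne H 0 with rfl | hH
  · have eigenspace_eq_bot {μ : ℂ} (hμ : μ ≠ 0) : (0 : End ℂ V).eigenspace μ = ⊥ := by
      ext v; simp [eq_comm (a := (0 : V)), hμ]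
    have hl' : (l : ℂ) ≠ 0 := Nat.cast_ne_zero.mpr hl.ne'
    rw [eigenspace_eq_bot hl', eigenspace_eq_bot (neg_ne_zero.mpr hl')]
    simp
  exact (IsSl2Triple.of_commutators hH hHX hHY hXY).bijOn_pow_toEnd_f (K := ℂ) (M := V) l
end

section
/- Fix positive integers k, d and let 1 ≤ n ≤ dk. Define the weighted incidence matrix A_{k,d,n}, with rows indexed by partitions μ of n−1 into at most d parts each at most k and columns indexed by partitions λ of n into at most d parts each at most k, by: the (μ,λ)-entry is e_i if μ = (k^{e_k},...,1^{e_1},0^{e_0}) and λ is obtained from μ by replacing one part equal to i by i+1, and 0 otherwise. Then A_{k,d,n} has full rank: its rank equals min(p(k,d,n−1), p(k,d,n)). -/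
/-- Partitions of `n` into at most `d` parts, each part at most `k`. -/
def RP (k d n : ℕ) : Type :=
  {P : Nat.Partition n // P.parts.card ≤ d ∧ ∀ i ∈ P.parts, i ≤ k}

instance (k d n : ℕ) : Fintype (RP k d n) :=
  Subtype.fintype _

/-- The weighted incidence matrix `A_{k,d,n}`: rows are indexed by partitions `μ`
of `n−1` (at most `d` parts, each at most `k`), columns by partitions `λ` of `n`;
the `(μ,λ)` entry is the multiplicity `e_i` of the part `i` in `μ` (where the
part `0` has multiplicity `d` minus the number of positive parts) if `λ` is
obtained from `μ` by replacing one part equal to `i` by `i+1`, and `0` otherwise. -/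
def Amat (k d n : ℕ) : Matrix (RP k d (n - 1)) (RP k d n) ℚ :=
  fun μ lam =>
    (if lam.1.parts = 1 ::ₘ μ.1.parts then ((d : ℚ) - μ.1.parts.card) else 0)
      + ∑ i ∈ Finset.Icc 1 (k - 1),
          if lam.1.parts = (i + 1) ::ₘ μ.1.parts.erase i then
            (μ.1.parts.count i : ℚ) else 0

/-!
Pad a partition of `n` into at most `d` parts, each at most `k`, with zeros to `d` parts
`a₁, …, a_d` and read it as the monomial `X_{a₁} ⋯ X_{a_d}` in the variables `X₀, …, X_k`, of
weight `a₁ + ⋯ + a_d = n`. Then `A_{k,d,n}` is the transpose of the matrix of the derivation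
`E : X_i ↦ X_{i+1}` (with `X_k ↦ 0`) from weight `n - 1` to weight `n`. Together with
`F : X_i ↦ i (k + 1 - i) X_{i-1}` and `H : X_i ↦ (2i - k) X_i` it forms an `sl₂`-triple, since
the relations between derivations need only be checked on the variables, and `H` acts on
weight `m` by `2m - dk`.

In a finite-dimensional `sl₂`-representation an `h`-eigenvector killed by `e` has its eigenvalue
in `ℕ`. Hence `E` is injective on weight `m` when `2m < dk`, and, applied to the transposed triple
`(-Hᵀ, Eᵀ, Fᵀ)`, `E` maps weight `m` onto weight `m + 1` when `2(m + 1) > dk`. One of the two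
always holds.
-/

open Multiset MvPolynomial Matrix

attribute [local instance] LieRing.ofAssociativeRing

namespace IsSl2Triple

theorem map {R L L' : Type*} [CommRing R] [LieRing L] [LieAlgebra R L] [LieRing L']
    [LieAlgebra R L'] {h e f : L} (t : IsSl2Triple h e f) {φ : L →ₗ⁅R⁆ L'}
    (hφ : Function.Injective φ) :
    IsSl2Triple (φ h) (φ e) (φ f) where
  h_ne_zero := (map_ne_zero_iff φ hφ).mpr t.h_ne_zero
  lie_e_f := by rw [← LieHom.map_lie, t.lie_e_f]
  lie_h_e_nsmul := by rw [← LieHom.map_lie, t.lie_h_e_nsmul, _root_.map_nsmul]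
  lie_h_f_nsmul := by rw [← LieHom.map_lie, t.lie_h_f_nsmul, map_neg, _root_.map_nsmul]

variable {T : Type*} [Fintype T] [DecidableEq T]

theorem transpose {R : Type*} [CommRing R] {h e f : Matrix T T R} (t : IsSl2Triple h e f) :
    IsSl2Triple hᵀ fᵀ eᵀ where
  h_ne_zero := by simpa using t.h_ne_zero
  lie_e_f := by
    rw [Ring.lie_def, ← transpose_mul, ← transpose_mul, ← transpose_sub, ← Ring.lie_def, t.lie_e_f]
  lie_h_e_nsmul := by
    rw [Ring.lie_def, ← transpose_mul, ← transpose_mul, ← transpose_sub, ← neg_sub, ← Ring.lie_def,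
      t.lie_h_f_nsmul, neg_neg, transpose_smul]
  lie_h_f_nsmul := by
    rw [Ring.lie_def, ← transpose_mul, ← transpose_mul, ← transpose_sub, ← neg_sub, ← Ring.lie_def,
      t.lie_h_e_nsmul, transpose_neg, transpose_smul]

theorem apply_eq_zero_of_ne_add_two {R : Type*} [CommRing R] [IsDomain R] {w : T → R}
    {e f : Matrix T T R} (t : IsSl2Triple (diagonal w) e f) {i j : T}
    (hij : w i ≠ w j + 2) : e i j = 0 := by
  have hrel := congrFun₂ t.lie_h_e_nsmul i j
  simp only [Ring.lie_def, Matrix.sub_apply, diagonal_mul, mul_diagonal, Matrix.smul_apply,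
    nsmul_eq_mul, Nat.cast_ofNat] at hrel
  have : (w i - (w j + 2)) * e i j = 0 := by linear_combination hrel
  exact (mul_eq_zero.mp this).resolve_left (sub_ne_zero.mpr hij)

variable {K : Type*} [Field K] [LinearOrder K] [IsStrictOrderedRing K] {h e f : Matrix T T K}
  {w : T → K}

theorem eq_zero_of_mulVec_eq_zero (t : IsSl2Triple h e f) {v : T → K} {c : K} (hc : c < 0)
    (hv : h *ᵥ v = c • v) (he : e *ᵥ v = 0) : v = 0 := by
  by_contra hne
  have P : (t.map lieEquivMatrix'.symm.injective).HasPrimitiveVectorWith v c := ⟨hne, hv, he⟩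
  obtain ⟨n, rfl⟩ := P.exists_nat
  exact (Nat.cast_nonneg n).not_gt hc

theorem rank_submatrix_eq_card_of_neg {α β : Type*} [Fintype α]
    (t : IsSl2Triple (diagonal w) e f) {c : K} (hc : c < 0)
    {a : α → T} (ha : Function.Injective a) (hwa : ∀ x, w (a x) = c)
    {b : β → T} (hwb : ∀ y, w y = c + 2 → y ∈ Set.range b) :
    (e.submatrix b a).rank = Fintype.card α := by
  suffices Function.Injective (e.submatrix b a).mulVec by
    rw [rank_eq_finrank_span_cols, finrank_span_eq_card (mulVec_injective_iff.mp this)]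
  refine (injective_iff_map_eq_zero (e.submatrix b a).mulVecLin).mpr fun x hx => ?_
  set v : T → K := Function.extend a x 0
  have hsum (g : T → K) : ∑ y, g y * v y = ∑ μ, g (a μ) * x μ :=
    (Fintype.sum_of_injective a ha _ _ (fun y hy => by simp [v, Function.extend_apply' _ _ _ hy])
      (fun μ => by simp [v, ha.extend_apply])).symm
  have hv : diagonal w *ᵥ v = c • v := by
    funext y
    rw [mulVec_diagonal, Pi.smul_apply, smul_eq_mul]
    by_cases hy : y ∈ Set.range a
    · obtain ⟨μ, rfl⟩ := hy
      rw [hwa]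
    · simp [v, Function.extend_apply' _ _ _ hy]
  have he : e *ᵥ v = 0 := by
    funext y
    rw [mulVec, dotProduct, hsum, Pi.zero_apply]
    by_cases hy : w y = c + 2
    · obtain ⟨ν, rfl⟩ := hwb y hy
      exact congrFun hx ν
    · exact Finset.sum_eq_zero fun μ _ => by
        rw [t.apply_eq_zero_of_ne_add_two (by rwa [hwa]), zero_mul]
  funext μ
  simpa [v, ha.extend_apply] using congrFun (t.eq_zero_of_mulVec_eq_zero hc hv he) (a μ)

theorem rank_submatrix_eq_min {α β : Type*} [Fintype α] [Fintype β]
    (t : IsSl2Triple (diagonal w) e f) (c : K)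
    {a : α → T} (ha : Function.Injective a) (hwa : ∀ x, w x = c ↔ x ∈ Set.range a)
    {b : β → T} (hb : Function.Injective b) (hwb : ∀ y, w y = c + 2 ↔ y ∈ Set.range b) :
    (e.submatrix b a).rank = min (Fintype.card α) (Fintype.card β) := by
  rcases lt_or_ge c 0 with hc | hc
  · have hrank := t.rank_submatrix_eq_card_of_neg hc ha (fun x => (hwa _).mpr ⟨x, rfl⟩)
      (fun y => (hwb y).mp)
    have := hrank ▸ rank_le_card_height (e.submatrix b a)
    omega
  · have t' := t.transpose.symm
    rw [diagonal_transpose, diagonal_neg] at t'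
    have hrank := t'.rank_submatrix_eq_card_of_neg (c := -(c + 2)) (by linarith) hb
      (fun y => by simp [(hwb _).mpr ⟨y, rfl⟩]) (fun x hx => (hwa x).mp (by simp at hx; linarith))
    rw [← transpose_submatrix, rank_transpose] at hrank
    have := hrank ▸ rank_le_card_width (e.submatrix b a)
    omega

end IsSl2Triple

def boundedMultisets (k d : ℕ) : Finset (Multiset ℕ) :=
  ((Finset.range (k + 1)).sym d).image (↑)

variable {k d : ℕ}

theorem mem_boundedMultisets {t : Multiset ℕ} :
    t ∈ boundedMultisets k d ↔ card t = d ∧ ∀ a ∈ t, a ≤ k := by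
  simp only [boundedMultisets, Finset.mem_image, Finset.mem_sym_iff, Finset.mem_range,
    Nat.lt_succ_iff]
  constructor
  · rintro ⟨s, hs, rfl⟩
    exact ⟨s.2, hs⟩
  · rintro ⟨hcard, hle⟩
    exact ⟨⟨t, hcard⟩, hle, rfl⟩

theorem cons_erase_mem_boundedMultisets {t : Multiset ℕ} (ht : t ∈ boundedMultisets k d)
    {i j : ℕ} (hi : i ∈ t) (hj : j ≤ k) : j ::ₘ t.erase i ∈ boundedMultisets k d := by
  rw [mem_boundedMultisets] at ht ⊢
  refine ⟨by rw [card_cons, card_erase_add_one hi, ht.1], fun a ha => ?_⟩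
  rcases mem_cons.mp ha with rfl | ha
  · exact hj
  · exact ht.2 a (mem_of_mem_erase ha)

theorem toFinsupp_cons_erase {t : Multiset ℕ} {i : ℕ} (hi : i ∈ t) (j : ℕ) :
    toFinsupp (j ::ₘ t.erase i) = toFinsupp t - Finsupp.single i 1 + Finsupp.single j 1 := by
  ext a
  have := count_pos.mpr hi
  obtain rfl | hai := eq_or_ne a i
  · simp only [toFinsupp_apply, Finsupp.add_apply, Finsupp.tsub_apply, Finsupp.single_apply,
      count_cons, count_erase_self]
    split_ifs <;> omega
  · simp only [toFinsupp_apply, Finsupp.add_apply, Finsupp.tsub_apply, Finsupp.single_apply,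
      count_cons, count_erase_of_ne hai, if_neg hai.symm, eq_comm (a := j)]
    omega

noncomputable def substDerivation (c : ℕ → ℚ) (τ : ℕ → ℕ) :
    Derivation ℚ (MvPolynomial ℕ ℚ) (MvPolynomial ℕ ℚ) :=
  mkDerivation ℚ fun i => c i • X (τ i)

theorem substDerivation_monomial (c : ℕ → ℚ) (τ : ℕ → ℕ) (t : Multiset ℕ) :
    substDerivation c τ (monomial (toFinsupp t) 1) =
      ∑ i ∈ t.toFinset, ((t.count i : ℚ) * c i) • monomial (toFinsupp (τ i ::ₘ t.erase i)) 1 := by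
  rw [substDerivation, mkDerivation_monomial, one_smul, Finsupp.sum, toFinsupp_support]
  refine Finset.sum_congr rfl fun i hi => ?_
  rw [toFinsupp_cons_erase (mem_toFinset.mp hi), toFinsupp_apply, smul_eq_mul, mul_smul_comm,
    X, monomial_mul, smul_monomial, smul_monomial, smul_eq_mul, smul_eq_mul, mul_one, mul_one,
    mul_comm]

variable (k d) in
/-- The matrix of `substDerivation c τ` on the monomials `∏ a ∈ t, X a`,
`t ∈ boundedMultisets k d`, when it preserves their span (`sumMonomials_substMatrix_mulVec`). -/
def substMatrix (c : ℕ → ℚ) (τ : ℕ → ℕ) :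
    Matrix (boundedMultisets k d) (boundedMultisets k d) ℚ :=
  fun s t => ∑ i ∈ Finset.range (k + 1),
    if s.1 = τ i ::ₘ t.1.erase i then (t.1.count i : ℚ) * c i else 0

variable (k d) in
noncomputable def sumMonomials : (boundedMultisets k d → ℚ) →ₗ[ℚ] MvPolynomial ℕ ℚ :=
  Fintype.linearCombination ℚ fun t => monomial (toFinsupp t.1) 1

theorem sumMonomials_injective : Function.Injective (sumMonomials k d) := by
  rw [sumMonomials, ← linearIndependent_iff_injective_fintypeLinearCombination]
  have := (basisMonomials ℕ ℚ).linearIndependent.comp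
    (fun t : boundedMultisets k d => toFinsupp t.1) (toFinsupp.injective.comp Subtype.val_injective)
  rw [coe_basisMonomials] at this
  exact this

theorem sum_substMatrix_smul_monomial {c : ℕ → ℚ} {τ : ℕ → ℕ}
    (hτ : ∀ i ≤ k, c i ≠ 0 → τ i ≤ k) (t : boundedMultisets k d) :
    ∑ s, substMatrix k d c τ s t • monomial (toFinsupp s.1) (1 : ℚ) =
      substDerivation c τ (monomial (toFinsupp t.1) 1) := by
  have ht := mem_boundedMultisets.mp t.2
  rw [substDerivation_monomial]
  simp only [substMatrix, Finset.sum_smul, ite_smul, zero_smul]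
  rw [Finset.sum_comm]
  refine (Finset.sum_subset (fun i hi => Finset.mem_range.mpr (Nat.lt_succ_of_le
    (ht.2 i (mem_toFinset.mp hi)))) fun i _ hi => ?_).symm.trans
    (Finset.sum_congr rfl fun i _ => ?_)
  · simp [count_eq_zero.mpr (mt mem_toFinset.mpr hi)]
  · rw [Finset.sum_coe_sort (boundedMultisets k d)
      (fun s => if s = τ i ::ₘ t.1.erase i then _ • monomial (toFinsupp s) 1 else 0),
      Finset.sum_ite_eq']
    split_ifs with hmem
    · rfl
    · suffices (t.1.count i : ℚ) * c i = 0 by rw [this, zero_smul]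
      by_contra hne
      obtain ⟨hcount, hc⟩ := mul_ne_zero_iff.mp hne
      have hi : i ∈ t.1 := count_ne_zero.mp (by exact_mod_cast hcount)
      exact hmem (cons_erase_mem_boundedMultisets t.2 hi (hτ i (ht.2 i hi) hc))

theorem sumMonomials_substMatrix_mulVec {c : ℕ → ℚ} {τ : ℕ → ℕ}
    (hτ : ∀ i ≤ k, c i ≠ 0 → τ i ≤ k) (x : boundedMultisets k d → ℚ) :
    sumMonomials k d (substMatrix k d c τ *ᵥ x) = substDerivation c τ (sumMonomials k d x) := by
  simp only [sumMonomials, Fintype.linearCombination_apply, map_sum]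
  simp only [Derivation.map_smul, ← sum_substMatrix_smul_monomial hτ, Finset.smul_sum, smul_smul,
    mulVec, dotProduct, Finset.sum_smul]
  rw [Finset.sum_comm]
  simp only [mul_comm]

theorem lie_substMatrix {c c' c'' : ℕ → ℚ} {τ τ' τ'' : ℕ → ℕ}
    (hτ : ∀ i ≤ k, c i ≠ 0 → τ i ≤ k) (hτ' : ∀ i ≤ k, c' i ≠ 0 → τ' i ≤ k)
    (hτ'' : ∀ i ≤ k, c'' i ≠ 0 → τ'' i ≤ k)
    (hD : ⁅substDerivation c τ, substDerivation c' τ'⁆ = substDerivation c'' τ'') :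
    ⁅substMatrix k d c τ, substMatrix k d c' τ'⁆ = substMatrix k d c'' τ'' := by
  refine Matrix.toLin'.injective (LinearMap.ext fun x => sumMonomials_injective ?_)
  rw [Matrix.toLin'_apply, Matrix.toLin'_apply, Ring.lie_def, sub_mulVec, ← mulVec_mulVec,
    ← mulVec_mulVec, map_sub, sumMonomials_substMatrix_mulVec hτ,
    sumMonomials_substMatrix_mulVec hτ', sumMonomials_substMatrix_mulVec hτ',
    sumMonomials_substMatrix_mulVec hτ, sumMonomials_substMatrix_mulVec hτ'', ← hD,
    Derivation.commutator_apply]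

theorem substMatrix_smul (a : ℚ) (c : ℕ → ℚ) (τ : ℕ → ℕ) :
    substMatrix k d (a • c) τ = a • substMatrix k d c τ := by
  ext s t
  simp only [substMatrix, Matrix.smul_apply, Pi.smul_apply, smul_eq_mul, Finset.mul_sum, mul_ite,
    mul_zero, mul_left_comm]

def raiseCoeff (k i : ℕ) : ℚ := if i < k then 1 else 0

def lowerCoeff (k i : ℕ) : ℚ := if i ≤ k then i * (k + 1 - i) else 0

def weightCoeff (k i : ℕ) : ℚ := if i ≤ k then 2 * i - k else 0

theorem lie_substDerivation_raise_lower :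
    ⁅substDerivation (raiseCoeff k) (· + 1), substDerivation (lowerCoeff k) (· - 1)⁆ =
      substDerivation (weightCoeff k) id := by
  refine derivation_ext fun i => ?_
  simp only [Derivation.commutator_apply, substDerivation, mkDerivation_X, Derivation.map_smul,
    smul_smul, id]
  rcases i with _ | i
  · rcases k with _ | k
    · simp [raiseCoeff, lowerCoeff, weightCoeff]
    · simp [raiseCoeff, lowerCoeff, weightCoeff]
      module
  · simp only [Nat.add_sub_cancel, ← sub_smul]
    congr 1
    unfold raiseCoeff lowerCoeff weightCoeff
    obtain h | rfl | h := lt_trichotomy (i + 1) k <;>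
      split_ifs <;> first | omega | (push_cast; ring)

theorem lie_substDerivation_weight_raise :
    ⁅substDerivation (weightCoeff k) id, substDerivation (raiseCoeff k) (· + 1)⁆ =
      substDerivation ((2 : ℚ) • raiseCoeff k) (· + 1) := by
  refine derivation_ext fun i => ?_
  simp only [Derivation.commutator_apply, substDerivation, mkDerivation_X, Derivation.map_smul,
    smul_smul, id, ← sub_smul, Pi.smul_apply]
  congr 1
  unfold raiseCoeff weightCoeff
  split_ifs <;> first | omega | (push_cast; ring)

theorem lie_substDerivation_weight_lower :
    ⁅substDerivation (weightCoeff k) id, substDerivation (lowerCoeff k) (· - 1)⁆ =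
      substDerivation ((-2 : ℚ) • lowerCoeff k) (· - 1) := by
  refine derivation_ext fun i => ?_
  simp only [Derivation.commutator_apply, substDerivation, mkDerivation_X, Derivation.map_smul,
    smul_smul, id, ← sub_smul, Pi.smul_apply]
  congr 1
  unfold lowerCoeff weightCoeff
  rcases i with _ | i
  · simp
  split_ifs <;> first | omega | (push_cast; ring)

theorem substMatrix_weightCoeff :
    substMatrix k d (weightCoeff k) id = diagonal fun t => 2 * (t.1.sum : ℚ) - d * k := by
  ext s t
  have ht := mem_boundedMultisets.mp t.2
  have hsub : ∀ a ∈ t.1, a ∈ Finset.range (k + 1) :=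
    fun a ha => Finset.mem_range.mpr (Nat.lt_succ_of_le (ht.2 a ha))
  have hterm (i : ℕ) :
      (if s.1 = id i ::ₘ t.1.erase i then (t.1.count i : ℚ) * weightCoeff k i else 0) =
        if s = t then (t.1.count i : ℚ) * (2 * i - k) else 0 := by
    by_cases hi : i ∈ t.1
    · simp only [id, cons_erase hi, ← Subtype.ext_iff, weightCoeff, if_pos (ht.2 i hi)]
    · simp [count_eq_zero.mpr hi]
  simp only [substMatrix, hterm, diagonal_apply]
  split_ifs with hst
  · rw [hst]
    have hsum : (t.1.sum : ℚ) = ∑ i ∈ Finset.range (k + 1), (t.1.count i : ℚ) * i := by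
      rw [Finset.sum_multiset_count_of_subset t.1 _ fun a ha => hsub a (mem_toFinset.mp ha)]
      push_cast [smul_eq_mul]
      rfl
    have hcard : (d : ℚ) = ∑ i ∈ Finset.range (k + 1), (t.1.count i : ℚ) := by
      exact_mod_cast ht.1 ▸ (Multiset.sum_count_eq_card hsub).symm
    rw [hsum, hcard, Finset.mul_sum, Finset.sum_mul, ← Finset.sum_sub_distrib]
    exact Finset.sum_congr rfl fun i _ => by ring
  · exact Finset.sum_const_zero

theorem isSl2Triple_raise_lower (hk : 0 < k) (hd : 0 < d) :
    IsSl2Triple (diagonal fun t : boundedMultisets k d => 2 * (t.1.sum : ℚ) - d * k)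
      (substMatrix k d (raiseCoeff k) (· + 1)) (substMatrix k d (lowerCoeff k) (· - 1)) := by
  have hraise (a : ℚ) : ∀ i ≤ k, (a • raiseCoeff k) i ≠ 0 → i + 1 ≤ k := fun i _ h => by
    by_contra hik
    simp [raiseCoeff, show ¬i < k by omega] at h
  have hlower (a : ℚ) : ∀ i ≤ k, (a • lowerCoeff k) i ≠ 0 → i - 1 ≤ k := fun i _ _ => by omega
  have hweight : ∀ i ≤ k, weightCoeff k i ≠ 0 → id i ≤ k := fun i hi _ => hi
  rw [← substMatrix_weightCoeff]
  refine ⟨?_, ?_, ?_, ?_⟩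
  · rw [substMatrix_weightCoeff]
    intro h
    have hzero : replicate d 0 ∈ boundedMultisets k d := mem_boundedMultisets.mpr
      ⟨card_replicate d 0, fun a ha => (eq_of_mem_replicate ha).symm ▸ Nat.zero_le k⟩
    have := congrFun₂ h ⟨_, hzero⟩ ⟨_, hzero⟩
    simp at this
    omega
  · simpa using lie_substMatrix (d := d) (by simpa using hraise 1) (by simpa using hlower 1) hweight
      lie_substDerivation_raise_lower
  · rw [lie_substMatrix (d := d) hweight (by simpa using hraise 1) (hraise 2)
      lie_substDerivation_weight_raise, substMatrix_smul, two_smul, two_smul]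
  · rw [lie_substMatrix (d := d) hweight (by simpa using hlower 1) (hlower (-2))
      lie_substDerivation_weight_lower, substMatrix_smul, neg_smul, two_smul, two_smul]

theorem filter_pos_cons_erase (s : Multiset ℕ) (i : ℕ) :
    ((i + 1) ::ₘ s.erase i).filter (0 < ·) = (i + 1) ::ₘ (s.filter (0 < ·)).erase i := by
  rw [filter_cons_of_pos _ i.succ_pos, ← sub_singleton, ← sub_singleton, filter_sub]
  rcases i with _ | i <;> simp [filter_singleton, sub_singleton]

theorem filter_pos_add_replicate {s : Multiset ℕ} {d : ℕ} (hs : card s = d) :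
    s.filter (0 < ·) + replicate (d - card (s.filter (0 < ·))) 0 = s := by
  subst hs
  have hzero : s.filter (¬0 < ·) = replicate (card (s.filter (¬0 < ·))) 0 :=
    eq_replicate_card.mpr fun b hb => by have := (mem_filter.mp hb).2; omega
  have hcard := congrArg card (filter_add_not (0 < ·) s)
  rw [card_add] at hcard
  conv_rhs => rw [← filter_add_not (0 < ·) s, hzero]
  congr 2
  omega

def padZeros (n : ℕ) (μ : RP k d n) : boundedMultisets k d :=
  ⟨μ.1.parts + replicate (d - card μ.1.parts) 0, mem_boundedMultisets.mpr
    ⟨by rw [card_add, card_replicate]; have := μ.2.1; omega, fun a ha => by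
      rcases mem_add.mp ha with ha | ha
      · exact μ.2.2 a ha
      · rw [eq_of_mem_replicate ha]; exact Nat.zero_le k⟩⟩

theorem filter_pos_padZeros {n : ℕ} (μ : RP k d n) :
    (padZeros n μ).1.filter (0 < ·) = μ.1.parts := by
  rw [padZeros, filter_add, filter_eq_self.mpr fun a ha => μ.1.parts_pos ha,
    filter_eq_nil.mpr fun a ha => by rw [eq_of_mem_replicate ha]; exact lt_irrefl 0, add_zero]

theorem padZeros_eq_iff {n : ℕ} {μ : RP k d n} {t : boundedMultisets k d} :
    padZeros n μ = t ↔ μ.1.parts = t.1.filter (0 < ·) := by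
  refine ⟨fun h => h ▸ (filter_pos_padZeros μ).symm, fun h => Subtype.ext ?_⟩
  change μ.1.parts + _ = t.1
  rw [h, filter_pos_add_replicate (mem_boundedMultisets.mp t.2).1]

theorem padZeros_injective {n : ℕ} : Function.Injective (padZeros (k := k) (d := d) n) :=
  fun _ ν h => Subtype.ext <| Nat.Partition.ext <|
    (padZeros_eq_iff.mp h).trans (filter_pos_padZeros ν)

theorem mem_range_padZeros_iff {n : ℕ} {t : boundedMultisets k d} :
    t ∈ Set.range (padZeros n) ↔ t.1.sum = n := by
  have hsum : (t.1.filter (0 < ·)).sum = t.1.sum := by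
    conv_rhs => rw [← filter_pos_add_replicate (rfl : card t.1 = _)]
    rw [sum_add, sum_replicate, smul_zero, add_zero]
  constructor
  · rintro ⟨μ, rfl⟩
    rw [← hsum, filter_pos_padZeros, μ.1.parts_sum]
  · intro h
    have ht := mem_boundedMultisets.mp t.2
    refine ⟨⟨⟨t.1.filter (0 < ·), fun hi => (mem_filter.mp hi).2, hsum.trans h⟩,
      (card_le_card (filter_le _ t.1)).trans_eq ht.1, fun i hi => ht.2 i (mem_of_mem_filter hi)⟩,
      padZeros_eq_iff.mpr rfl⟩

theorem count_padZeros {n : ℕ} (μ : RP k d n) (i : ℕ) :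
    (padZeros n μ).1.count i = if i = 0 then d - card μ.1.parts else μ.1.parts.count i := by
  have h0 : (0 : ℕ) ∉ μ.1.parts := fun h => lt_irrefl 0 (μ.1.parts_pos h)
  rcases eq_or_ne i 0 with rfl | hi
  · simp [padZeros, count_eq_zero.mpr h0]
  · simp [padZeros, count_replicate, hi, hi.symm]

theorem padZeros_eq_cons_erase_iff {m n : ℕ} {μ : RP k d m} {lam : RP k d n} {i : ℕ}
    (hi : i ∈ (padZeros m μ).1) (hik : i < k) :
    (padZeros n lam).1 = (i + 1) ::ₘ (padZeros m μ).1.erase i ↔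
      lam.1.parts = (i + 1) ::ₘ μ.1.parts.erase i := by
  rw [← Subtype.ext_iff (a2 := ⟨_, cons_erase_mem_boundedMultisets (padZeros m μ).2 hi hik⟩),
    padZeros_eq_iff, filter_pos_cons_erase, filter_pos_padZeros]

theorem Amat_apply_eq_substMatrix (hk : 0 < k) {m : ℕ} (μ : RP k d m) (lam : RP k d (m + 1)) :
    Amat k d (m + 1) μ lam =
      substMatrix k d (raiseCoeff k) (· + 1) (padZeros (m + 1) lam) (padZeros m μ) := by
  have hterm (i : ℕ) :
      (if (padZeros (m + 1) lam).1 = (i + 1) ::ₘ (padZeros m μ).1.erase i then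
        ((padZeros m μ).1.count i : ℚ) * raiseCoeff k i else 0) =
      if i < k then (if lam.1.parts = (i + 1) ::ₘ μ.1.parts.erase i then
        ((padZeros m μ).1.count i : ℚ) else 0) else 0 := by
    by_cases hik : i < k
    · by_cases hi : i ∈ (padZeros m μ).1
      · simp only [padZeros_eq_cons_erase_iff hi hik, raiseCoeff, if_pos hik, mul_one]
      · simp [count_eq_zero.mpr hi]
    · simp [raiseCoeff, hik]
  simp only [substMatrix, hterm]
  rw [Finset.sum_range_succ, if_neg (lt_irrefl k), add_zero,
    Finset.sum_ite_of_true fun i hi => Finset.mem_range.mp hi]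
  have hrange : Finset.range k = insert 0 (Finset.Icc 1 (k - 1)) := by
    ext i
    simp only [Finset.mem_range, Finset.mem_insert, Finset.mem_Icc]
    omega
  have h0 : (0 : ℕ) ∉ μ.1.parts := fun h => lt_irrefl 0 (μ.1.parts_pos h)
  rw [hrange, Finset.sum_insert (by simp), count_padZeros, if_pos rfl, erase_of_notMem h0,
    Nat.cast_sub μ.2.1]
  simp only [Amat, zero_add]
  refine congrArg _ (Finset.sum_congr rfl fun i hi => ?_)
  rw [count_padZeros, if_neg (show i ≠ 0 by simp at hi; omega)]

theorem card_RP (n : ℕ) : Fintype.card (RP k d n) = p k d n := by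
  rw [p, ← Fintype.card_subtype]
  rfl

theorem weight_eq_iff_mem_range_padZeros (n : ℕ) (t : boundedMultisets k d) :
    2 * (t.1.sum : ℚ) - d * k = 2 * n - d * k ↔ t ∈ Set.range (padZeros n) := by
  rw [mem_range_padZeros_iff, sub_left_inj, mul_right_inj' two_ne_zero, Nat.cast_inj]

theorem Amat_full_rank_general (k d n : ℕ) (hk : 0 < k) (hd : 0 < d)
    (hn1 : 1 ≤ n) :
    (Amat k d n).rank = min (p k d (n - 1)) (p k d n) := by
  obtain ⟨m, rfl⟩ : ∃ m, n = m + 1 := ⟨n - 1, by omega⟩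
  have hA : Amat k d (m + 1) =
      ((substMatrix k d (raiseCoeff k) (· + 1)).submatrix (padZeros (m + 1)) (padZeros m))ᵀ := by
    ext μ lam
    exact Amat_apply_eq_substMatrix hk μ lam
  rw [hA, rank_transpose, ← card_RP, ← card_RP]
  refine (isSl2Triple_raise_lower hk hd).rank_submatrix_eq_min _ padZeros_injective
    (weight_eq_iff_mem_range_padZeros m) padZeros_injective fun t => ?_
  rw [← weight_eq_iff_mem_range_padZeros (m + 1)]
  push_cast
  constructor <;> intro h <;> linarith

/-- The weighted incidence matrix `A_{k,d,n}` has full rank for `1 ≤ n ≤ d*k`. -/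
theorem Amat_full_rank (k d n : ℕ) (hk : 0 < k) (hd : 0 < d)
    (hn1 : 1 ≤ n) (hn2 : n ≤ d * k) :
    (Amat k d n).rank = min (p k d (n - 1)) (p k d n) :=
  Amat_full_rank_general k d n hk hd hn1
end

section
/- Let V be a real vector space, d ≥ 1 and k ≥ 1 integers, μ : V^d → ℝ a symmetric d-multilinear form, and g : V → V a linear map with g = id + N where N^{k+1} = 0, such that μ(g v_1, ..., g v_d) = μ(v_1, ..., v_d) for all v_1,...,v_d ∈ V. Fix H ∈ V. Then for all natural numbers e_0,...,e_k with Σ_{i=0}^{k} e_i = d and Σ_{i=0}^{k} i·e_i > dk/2, the intersection number μ evaluated on the list of vectors consisting of N^i(H) repeated e_i times for each i = 0,...,k is zero. -/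
/-!
Write `c a = μ (N^{a₁} H, …, N^{a_d} H)` for `a ∈ ℕ^d`. Nilpotency makes `c` vanish outside
the box `[0,k]^d`, and expanding `μ (g v) = μ v` by multilinearity gives
`∑_S c (a + 1_S) = c a` over all subsets `S` of the `d` slots. By downward induction on the
level `|a| = ∑ a_j`, the level-`n` part of `c` is then killed by `raise c a = ∑_l c (a + e_l)`.
On the box, `raise` and the weighted operator `lower` satisfy the sl₂ relation
`[lower, raise] = 2|a| - dk` and are adjoint for the weights `∏_j (k - a_j)! / a_j!`, so a
level-`n` function `c` killed by `raise` has `(2n - dk) ‖c‖² = -‖lower c‖²`, which forces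
`c = 0` once `2n > dk`.
-/

open Finset Function

namespace BoxSl2

variable {d : ℕ}

def raise (c : (Fin d → ℕ) → ℝ) (a : Fin d → ℕ) : ℝ :=
  ∑ l, c (a + Pi.single l 1)

/-- The coefficient `b_j (k + 1 - b_j)` is that of the sl₂ lowering operator on `Sym^k`; it
vanishes at `b_j = 0`, where `b - Pi.single j 1` truncates. -/
def lower (k : ℕ) (c : (Fin d → ℕ) → ℝ) (b : Fin d → ℕ) : ℝ :=
  ∑ j, (b j : ℝ) * (k + 1 - b j) * c (b - Pi.single j 1)

lemma sub_single_add_single_comm {b : Fin d → ℕ} {j l : Fin d} (h : j ≠ l) :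
    b - Pi.single j 1 + Pi.single l 1 = b + Pi.single l 1 - Pi.single j 1 := by
  ext m
  simp only [Pi.add_apply, Pi.sub_apply, Pi.single_apply]
  split_ifs <;> omega

lemma sub_single_add_single_self {b : Fin d → ℕ} {j : Fin d} (h : b j ≠ 0) :
    b - Pi.single j 1 + Pi.single j 1 = b := by
  ext m
  rcases eq_or_ne m j with rfl | hm
  · simp only [Pi.add_apply, Pi.sub_apply, Pi.single_eq_same]
    omega
  · simp [Pi.single_eq_of_ne hm]

theorem lower_raise_sub_raise_lower (k : ℕ) (c : (Fin d → ℕ) → ℝ) (b : Fin d → ℕ) :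
    lower k (raise c) b - raise (lower k c) b = (2 * ∑ j, (b j : ℝ) - d * k) * c b := by
  have diagonal (j : Fin d) :
      ∑ l, ((b j : ℝ) * (k + 1 - b j) * c (b - Pi.single j 1 + Pi.single l 1)
        - ((b + Pi.single l 1 : Fin d → ℕ) j : ℝ)
          * (k + 1 - (b + Pi.single l 1 : Fin d → ℕ) j) * c (b + Pi.single l 1 - Pi.single j 1))
        = (2 * b j - k) * c b := by
    rw [sum_eq_single j (fun l _ hlj => ?_) (by simp)]
    · rcases eq_or_ne (b j) 0 with hb | hb
      · simp [hb]
      · simp only [sub_single_add_single_self hb, add_tsub_cancel_right, Pi.add_apply,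
          Pi.single_eq_same]
        push_cast
        ring
    · simp [sub_single_add_single_comm hlj.symm, Pi.single_eq_of_ne hlj.symm]
  simp only [lower, raise, mul_sum]
  conv_lhs => arg 2; rw [sum_comm]
  simp only [← sum_sub_distrib, diagonal, ← sum_mul]
  simp [sum_sub_distrib, ← mul_sum]

/-- `(k - i)! / i!` is, up to a constant, the reciprocal of `∏_{m < i} (m + 1) (k - m)`, which
makes `lower` the adjoint of `raise` (`weightedInner_raise`). -/
noncomputable def weight (k : ℕ) (b : Fin d → ℕ) : ℝ :=
  ∏ j, ((k - b j).factorial : ℝ) / (b j).factorial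

lemma weight_pos (k : ℕ) (b : Fin d → ℕ) : 0 < weight k b :=
  prod_pos fun _ _ => by positivity

lemma weight_eq_mul_weight_add_single {k : ℕ} {b : Fin d → ℕ} {l : Fin d}
    (hl : b l < k) :
    weight k b = (b l + 1) * (k - b l) * weight k (b + Pi.single l 1) := by
  unfold weight
  rw [Fintype.prod_eq_mul_prod_compl l, Fintype.prod_eq_mul_prod_compl l, ← mul_assoc]
  congr 1
  · obtain ⟨m, rfl⟩ := Nat.exists_eq_add_of_lt hl
    simp only [Pi.add_apply, Pi.single_eq_same, show b l + m + 1 - b l = m + 1 by omega,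
      show b l + m + 1 - (b l + 1) = m by omega, Nat.factorial_succ]
    push_cast
    field_simp
    ring
  · refine prod_congr rfl fun j hj => ?_
    rw [Pi.add_apply, Pi.single_eq_of_ne (by simpa using hj), add_zero]

noncomputable def weightedInner (k : ℕ) (f g : (Fin d → ℕ) → ℝ) : ℝ :=
  ∑ b ∈ Iic fun _ => k, weight k b * f b * g b

variable {k : ℕ} {c y : (Fin d → ℕ) → ℝ}

lemma support_lower_subset (hc : support c ⊆ Set.Iic fun _ => k) :
    support (lower k c) ⊆ Set.Iic fun _ => k := by
  intro b hb
  obtain ⟨j, -, hj⟩ := exists_ne_zero_of_sum_ne_zero hb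
  simp only [ne_eq, mul_eq_zero, not_or] at hj
  obtain ⟨⟨-, hcoeff⟩, hcb⟩ := hj
  have hsub : ∀ m, (b - Pi.single j 1 : Fin d → ℕ) m ≤ k := hc hcb
  intro m
  rcases eq_or_ne m j with rfl | hm
  · have : b m ≠ k + 1 := by rintro h; apply hcoeff; rw [h]; push_cast; ring
    have := hsub m
    simp only [Pi.sub_apply, Pi.single_eq_same] at this
    show b m ≤ k
    omega
  · simpa [Pi.single_eq_of_ne hm] using hsub m

theorem weightedInner_raise (hc : support c ⊆ Set.Iic fun _ => k)
    (hy : support y ⊆ Set.Iic fun _ => k) :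
    weightedInner k c (raise y) = weightedInner k (lower k c) y := by
  simp only [weightedInner, raise, lower, mul_sum, sum_mul]
  rw [sum_comm, sum_comm (s := Iic _)]
  refine sum_congr rfl fun l _ => sum_bij_ne_zero (fun b _ _ => b + Pi.single l 1)
    (fun b _ hb => ?_) (fun _ _ _ _ _ _ => add_right_cancel) (fun b' _ hb' => ?_)
    (fun b _ hb => ?_)
  · exact mem_Iic.2 (hy (right_ne_zero_of_mul hb))
  · simp only [ne_eq, mul_eq_zero, Nat.cast_eq_zero, not_or] at hb'
    obtain ⟨⟨-, ⟨hl, -⟩, hcb⟩, hyb⟩ := hb'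
    refine ⟨b' - Pi.single l 1, mem_Iic.2 (hc hcb), ?_, sub_single_add_single_self hl⟩
    rw [sub_single_add_single_self hl]
    exact mul_ne_zero (mul_ne_zero (weight_pos k _).ne' hcb) hyb
  · have hbl : b l < k := by simpa using hy (right_ne_zero_of_mul hb) l
    rw [weight_eq_mul_weight_add_single hbl, add_tsub_cancel_right]
    simp only [Pi.add_apply, Pi.single_eq_same]
    push_cast
    ring

lemma weight_mul_self_nonneg (k : ℕ) (f : (Fin d → ℕ) → ℝ) (b : Fin d → ℕ) :
    0 ≤ weight k b * f b * f b := by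
  rw [mul_assoc]
  exact mul_nonneg (weight_pos k b).le (mul_self_nonneg _)

lemma weightedInner_self_nonneg (k : ℕ) (f : (Fin d → ℕ) → ℝ) :
    0 ≤ weightedInner k f f :=
  sum_nonneg fun b _ => weight_mul_self_nonneg k f b

lemma eq_zero_of_weightedInner_self_eq_zero (hc : support c ⊆ Set.Iic fun _ => k)
    (h : weightedInner k c c = 0) : c = 0 := by
  ext b
  by_contra hb
  have hterm := (sum_eq_zero_iff_of_nonneg fun b _ => weight_mul_self_nonneg k c b).1 h b
    (mem_Iic.2 (hc hb))
  simp [(weight_pos k b).ne'] at hterm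
  exact hb hterm

theorem eq_zero_of_raise_eq_zero {n : ℕ} (hc : support c ⊆ Set.Iic fun _ => k)
    (hlevel : ∀ b, c b ≠ 0 → ∑ j, b j = n) (hn : d * k < 2 * n) (hraise : raise c = 0) :
    c = 0 := by
  have eigen (b) : (2 * n - d * k : ℝ) * c b = - raise (lower k c) b := by
    have hcomm := lower_raise_sub_raise_lower k c b
    simp only [hraise, lower, Pi.zero_apply, mul_zero, sum_const_zero, zero_sub] at hcomm
    rcases eq_or_ne (c b) 0 with hb | hb
    · simp [hb] at hcomm ⊢
      linarith
    · rw [← Nat.cast_sum, hlevel b hb] at hcomm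
      linarith
  have hpos : (0 : ℝ) < 2 * n - d * k := by
    rw [sub_pos]; exact_mod_cast hn
  have key : (2 * n - d * k : ℝ) * weightedInner k c c =
      - weightedInner k (lower k c) (lower k c) := by
    rw [← weightedInner_raise hc (support_lower_subset hc), weightedInner, weightedInner, mul_sum,
      ← sum_neg_distrib]
    refine sum_congr rfl fun b _ => ?_
    linear_combination weight k b * c b * eigen b
  apply eq_zero_of_weightedInner_self_eq_zero hc
  nlinarith [weightedInner_self_nonneg k c, weightedInner_self_nonneg k (lower k c)]

lemma sum_add_single (a : Fin d → ℕ) (l : Fin d) :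
    ∑ j, (a + Pi.single l 1 : Fin d → ℕ) j = ∑ j, a j + 1 := by
  simp [sum_add_distrib]

lemma sum_add_piecewise (a : Fin d → ℕ) (S : Finset (Fin d)) :
    ∑ j, (a + S.piecewise 1 0 : Fin d → ℕ) j = ∑ j, a j + #S := by
  simp [sum_add_distrib, sum_piecewise]

lemma piecewise_singleton_one_zero (l : Fin d) :
    ({l} : Finset (Fin d)).piecewise 1 0 = (Pi.single l 1 : Fin d → ℕ) := by
  ext m
  simp [piecewise, Pi.single_apply]

lemma raise_eq_zero_of_sum_piecewise_eq
    (hrel : ∀ a, ∑ S : Finset (Fin d), c (a + S.piecewise 1 0) = c a) {a : Fin d → ℕ}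
    (habove : ∀ b, ∑ j, a j + 1 < ∑ j, b j → c b = 0) : raise c a = 0 := by
  have h := hrel a
  rw [← sum_subset (subset_univ (insert ∅ (univ.map ⟨singleton, singleton_injective⟩)))
    fun S _ hS => habove _ ?_, sum_insert (by simp), sum_map] at h
  · simpa [raise, piecewise_singleton_one_zero] using h
  · rw [sum_add_piecewise]
    simp only [mem_insert, mem_map, mem_univ, true_and, not_or, not_exists] at hS
    have : #S ≠ 0 := by simpa using hS.1
    have : #S ≠ 1 := fun h1 => by obtain ⟨l, rfl⟩ := card_eq_one.1 h1; exact hS.2 l rfl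
    omega

lemma sum_le_of_support_subset (hc : support c ⊆ Set.Iic fun _ => k) {a : Fin d → ℕ}
    (ha : c a ≠ 0) : ∑ j, a j ≤ d * k := by
  simpa using sum_le_sum fun j (_ : j ∈ univ) => hc ha j

theorem eq_zero_of_sum_piecewise_eq (hc : support c ⊆ Set.Iic fun _ => k)
    (hrel : ∀ a, ∑ S : Finset (Fin d), c (a + S.piecewise 1 0) = c a) (a : Fin d → ℕ)
    (ha : d * k < 2 * ∑ j, a j) : c a = 0 := by
  induction hm : d * k - ∑ j, a j using Nat.strong_induction_on generalizing a with
  | _ m ih =>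
    by_contra hca
    set n := ∑ j, a j
    have habove (b : Fin d → ℕ) (hb : n < ∑ j, b j) : c b = 0 := by
      by_contra hcb
      have := sum_le_of_support_subset hc hcb
      exact hcb (ih _ (by omega) b (by omega) rfl)
    have hlevel : (fun b => if ∑ j, b j = n then c b else 0) = 0 := by
      refine eq_zero_of_raise_eq_zero (fun b hb => hc (by aesop)) (fun b hb => by aesop) ha ?_
      ext b
      by_cases hb : ∑ j, b j + 1 = n
      · simpa only [raise, sum_add_single, hb, if_true, Pi.zero_apply] using
          raise_eq_zero_of_sum_piecewise_eq hrel (a := b) fun b' hb' => habove b' (by omega)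
      · simp only [raise, sum_add_single, hb, if_false, sum_const_zero, Pi.zero_apply]
    have := congrFun hlevel a
    rw [if_pos rfl] at this
    exact hca this

end BoxSl2

namespace MultilinearMap

variable {R V M : Type*} [Semiring R] [AddCommMonoid V] [Module R V] [AddCommMonoid M]
  [Module R M] {d : ℕ} (μ : MultilinearMap R (fun _ : Fin d => V) M) {N : Module.End R V}

lemma support_apply_pow_subset_Iic {k : ℕ} (hN : N ^ (k + 1) = 0) (H : V) :
    support (fun a : Fin d → ℕ => μ fun j => (N ^ a j) H) ⊆ Set.Iic fun _ => k := by
  intro a ha j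
  show a j ≤ k
  by_contra hj
  exact ha (μ.map_coord_zero j (by rw [pow_eq_zero_of_le (by omega) hN]; rfl))

lemma sum_piecewise_apply_pow (hinv : ∀ v : Fin d → V, μ (fun j => (1 + N) (v j)) = μ v)
    (H : V) (a : Fin d → ℕ) :
    ∑ S : Finset (Fin d), μ (fun j => (N ^ (a + S.piecewise 1 0 : Fin d → ℕ) j) H) =
      μ fun j => (N ^ a j) H := by
  have hsplit : (fun j => (1 + N) ((N ^ a j) H)) =
      (fun j => (N ^ (a j + 1)) H) + fun j => (N ^ a j) H := by
    ext j
    simp [pow_succ', add_comm]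
  rw [← hinv, hsplit, μ.map_add_univ]
  refine sum_congr rfl fun S _ => congrArg μ (funext fun j => ?_)
  by_cases hj : j ∈ S <;> simp [hj]

end MultilinearMap

theorem vanishing_of_intersection_numbers_general (V : Type*) [AddCommGroup V] [Module ℝ V]
    (d k : ℕ)
    (μ : MultilinearMap ℝ (fun _ : Fin d => V) ℝ)
    (N : Module.End ℝ V) (hN : N ^ (k + 1) = 0)
    (hinv : ∀ v : Fin d → V, μ (fun j => (1 + N) (v j)) = μ v)
    (H : V) (e : Fin (k + 1) → ℕ)
    (h2 : d * k < 2 * ∑ i : Fin (k + 1), (i : ℕ) * e i)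
    (ι : Fin d → Fin (k + 1))
    (hι : ∀ i : Fin (k + 1), (Finset.univ.filter fun j => ι j = i).card = e i) :
    μ (fun j => (N ^ (ι j : ℕ)) H) = 0 := by
  have hlevel : ∑ j, (ι j : ℕ) = ∑ i : Fin (k + 1), (i : ℕ) * e i := by
    rw [← sum_fiberwise univ ι]
    refine sum_congr rfl fun i _ => ?_
    rw [sum_congr rfl fun j hj => congrArg Fin.val (mem_filter.1 hj).2, sum_const, hι,
      smul_eq_mul, mul_comm]
  exact BoxSl2.eq_zero_of_sum_piecewise_eq (μ.support_apply_pow_subset_Iic hN H)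
    (μ.sum_piecewise_apply_pow hinv H) (fun j => ι j) (hlevel ▸ h2)

/-- Abstract core of the bound `plov(f) ≤ (k/2+1)d`: if `μ` is a symmetric
`d`-multilinear form invariant under `g = 1 + N` with `N^(k+1) = 0`, then `μ`
vanishes on any list of vectors consisting of `N^i H` repeated `e_i` times
(for `i = 0,…,k`) whenever `∑ e_i = d` and `∑ i·e_i > dk/2`. -/
theorem vanishing_of_intersection_numbers (V : Type*) [AddCommGroup V] [Module ℝ V]
    (d k : ℕ) (hd : 1 ≤ d) (hk : 1 ≤ k)
    (μ : MultilinearMap ℝ (fun _ : Fin d => V) ℝ)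
    (hsymm : ∀ (σ : Equiv.Perm (Fin d)) (v : Fin d → V), μ (v ∘ σ) = μ v)
    (N : Module.End ℝ V) (hN : N ^ (k + 1) = 0)
    (hinv : ∀ v : Fin d → V, μ (fun j => (1 + N) (v j)) = μ v)
    (H : V) (e : Fin (k + 1) → ℕ)
    (h1 : ∑ i, e i = d)
    (h2 : d * k < 2 * ∑ i : Fin (k + 1), (i : ℕ) * e i)
    (ι : Fin d → Fin (k + 1))
    (hι : ∀ i : Fin (k + 1), (Finset.univ.filter fun j => ι j = i).card = e i) :
    μ (fun j => (N ^ (ι j : ℕ)) H) = 0 :=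
  vanishing_of_intersection_numbers_general V d k μ N hN hinv H e h2 ι hι
end

section
/- Let V be a real vector space, μ : V^d → ℝ a symmetric d-multilinear form invariant under a linear map g = id + N with N^{k+1} = 0 (i.e., μ(g v_1,...,g v_d) = μ(v_1,...,v_d) for all v_i), and H ∈ V. Then the function n ↦ μ(Δ_n, ..., Δ_n) (with Δ_n in all d slots), where Δ_n = Σ_{i=0}^{k} C(n, i+1) N^i H, is a polynomial function of n of degree at most (k/2 + 1)·d, where here C(n,i+1) denotes the polynomial binomial coefficient n(n−1)⋯(n−i)/(i+1)!. -/
/-!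
Put `c a = μ (N ^ a₁ H, …, N ^ a_d H)` for `a ∈ ℕ^d`. Expanding `μ (Δ_n, …, Δ_n)` multilinearly
gives `∑ₐ c a ∏ⱼ C(n, aⱼ + 1)`, of degree `|a| + d` in `n`, so it suffices that `c a = 0` whenever
`2|a| > dk`. Nilpotency makes `c` vanish off the box `[0, k]^d`, and invariance under `1 + N`
reads `∑_{S ≠ ∅} c (a + 1_S) = 0`.

On functions on `ℕ^d`, `e c a = ∑ⱼ c (a + δⱼ)` and `f c a = ∑ⱼ aⱼ (k + 1 - aⱼ) c (a - δⱼ)`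
satisfy `⁅e, f⁆ c a = (dk - 2|a|) c a`: this is `sl₂` acting on the `d`-th tensor power of its
irreducible `(k + 1)`-dimensional representation, in a rescaled weight basis. Going down through
the levels `|a| = s` with `2s > dk`: once `c` vanishes above level `s`, the invariance relation
says that `e` kills the slice of `c` at level `s`. That slice is a highest weight vector of
negative weight `dk - 2s` on which `f` is nilpotent, hence zero.
-/

open Finset

namespace Module.End

theorem apply_pow_succ_of_highest_weight {R W : Type*} [CommRing R] [AddCommGroup W]
    [Module R W] {e f : Module.End R W} {v : W} {w : R} (he : e v = 0)
    (hweight : ∀ m : ℕ, ⁅e, f⁆ ((f ^ m) v) = (w - 2 * m) • (f ^ m) v) (m : ℕ) :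
    e ((f ^ (m + 1)) v) = ((m + 1) * (w - m)) • (f ^ m) v := by
  have hef : ∀ x, e (f x) = ⁅e, f⁆ x + f (e x) := fun x => by simp [Ring.lie_def]
  induction m with
  | zero => simpa [hef, he] using hweight 0
  | succ m ih =>
    rw [pow_succ', Module.End.mul_apply, hef, ih, hweight, map_smul, ← Module.End.mul_apply,
      ← pow_succ', ← add_smul]
    congr 1
    push_cast
    ring

theorem eq_zero_of_highest_weight_neg {𝕜 W : Type*} [Field 𝕜] [LinearOrder 𝕜]
    [IsStrictOrderedRing 𝕜] [AddCommGroup W] [Module 𝕜 W] {e f : Module.End 𝕜 W} {v : W} {w : 𝕜}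
    (hw : w < 0) (he : e v = 0)
    (hweight : ∀ m : ℕ, ⁅e, f⁆ ((f ^ m) v) = (w - 2 * m) • (f ^ m) v) {M : ℕ}
    (hM : (f ^ M) v = 0) : v = 0 := by
  induction M with
  | zero => simpa using hM
  | succ M ih =>
    refine ih ?_
    have h := apply_pow_succ_of_highest_weight he hweight M
    rw [hM, map_zero, eq_comm, smul_eq_zero] at h
    refine h.resolve_left (mul_ne_zero (by positivity) ?_)
    linarith [M.cast_nonneg (α := 𝕜)]

end Module.End

namespace Sl2TensorPower

variable (d : ℕ)

def sl2E : Module.End ℝ ((Fin d → ℕ) → ℝ) where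
  toFun c a := ∑ j, c (a + Pi.single j 1)
  map_add' _ _ := by ext; simp [sum_add_distrib]
  map_smul' _ _ := by ext; simp [mul_sum]

def sl2F (k : ℕ) : Module.End ℝ ((Fin d → ℕ) → ℝ) where
  toFun c a := ∑ j, (a j : ℝ) * (k + 1 - a j) * c (a - Pi.single j 1)
  map_add' _ _ := by ext; simp [mul_add, sum_add_distrib]
  map_smul' _ _ := by
    ext; simp only [Pi.smul_apply, smul_eq_mul, RingHom.id_apply, mul_sum]
    exact sum_congr rfl fun _ _ => by ring

variable {d}

theorem sl2E_apply (c : (Fin d → ℕ) → ℝ) (a : Fin d → ℕ) :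
    sl2E d c a = ∑ j, c (a + Pi.single j 1) := rfl

theorem sl2F_apply (k : ℕ) (c : (Fin d → ℕ) → ℝ) (a : Fin d → ℕ) :
    sl2F d k c a = ∑ j, (a j : ℝ) * (k + 1 - a j) * c (a - Pi.single j 1) := rfl

theorem sum_add_single (a : Fin d → ℕ) (j : Fin d) :
    ∑ i, (a + Pi.single j 1 : Fin d → ℕ) i = ∑ i, a i + 1 := by
  simp [sum_add_distrib]

theorem sub_single_add_single {a : Fin d → ℕ} {j : Fin d} (h : a j ≠ 0) :
    a - Pi.single j 1 + Pi.single j 1 = a := by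
  ext l
  simp only [Pi.add_apply, Pi.sub_apply, Pi.single_apply]
  split_ifs with hl <;> [subst hl; skip] <;> omega

theorem lie_sl2E_sl2F_term (k : ℕ) (c : (Fin d → ℕ) → ℝ) (a : Fin d → ℕ) (i j : Fin d) :
    ((a + Pi.single j 1 : Fin d → ℕ) i : ℝ) * (k + 1 - (a + Pi.single j 1 : Fin d → ℕ) i) *
        c (a + Pi.single j 1 - Pi.single i 1) -
      (a i : ℝ) * (k + 1 - a i) * c (a - Pi.single i 1 + Pi.single j 1) =
      if i = j then (k - 2 * a i) * c a else 0 := by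
  by_cases hij : i = j
  · subst hij
    by_cases h0 : a i = 0
    · simp [h0]
    · simp only [Pi.add_apply, Pi.single_eq_same, Nat.cast_add, Nat.cast_one,
        add_tsub_cancel_right, sub_single_add_single h0, if_true]
      ring
  · have hshift : a + Pi.single j 1 - Pi.single i 1 = a - Pi.single i 1 + Pi.single j 1 := by
      ext l
      simp only [Pi.add_apply, Pi.sub_apply, Pi.single_apply]
      split_ifs <;> omega
    simp [hij, hshift]

theorem lie_sl2E_sl2F_apply (k : ℕ) (c : (Fin d → ℕ) → ℝ) (a : Fin d → ℕ) :
    ⁅sl2E d, sl2F d k⁆ c a = (d * k - 2 * ∑ j, (a j : ℝ)) * c a := by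
  simp only [Ring.lie_def, LinearMap.sub_apply, Module.End.mul_apply, Pi.sub_apply, sl2E_apply,
    sl2F_apply, mul_sum]
  rw [sum_comm, ← sum_sub_distrib]
  simp_rw [← sum_sub_distrib, lie_sl2E_sl2F_term, sum_ite_eq, mem_univ, if_true, ← sum_mul,
    sum_sub_distrib, ← mul_sum]
  simp

def boxLevel (k s : ℕ) : Set (Fin d → ℕ) := {a | ∑ j, a j = s ∧ ∀ j, a j ≤ k}

theorem boxLevel_eq_empty {k s : ℕ} (hs : d * k < s) : boxLevel (d := d) k s = ∅ := by
  refine Set.eq_empty_of_forall_notMem fun a ⟨hsum, hbox⟩ => ?_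
  have : ∑ j, a j ≤ ∑ _j : Fin d, k := sum_le_sum fun j _ => hbox j
  simp only [sum_const, card_univ, Fintype.card_fin, smul_eq_mul] at this
  omega

theorem support_sl2F_subset {k s : ℕ} {c : (Fin d → ℕ) → ℝ}
    (hc : Function.support c ⊆ boxLevel k s) :
    Function.support (sl2F d k c) ⊆ boxLevel k (s + 1) := by
  intro a ha
  rw [Function.mem_support, sl2F_apply] at ha
  obtain ⟨j, -, hj⟩ := exists_ne_zero_of_sum_ne_zero ha
  have haj : a j ≠ 0 := by rintro h; simp [h] at hj
  have hajk : a j ≠ k + 1 := by rintro h; apply hj; rw [h]; push_cast; ring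
  obtain ⟨hsum, hbox⟩ := hc (right_ne_zero_of_mul hj)
  refine ⟨by rw [← sub_single_add_single haj, sum_add_single, hsum], fun l => ?_⟩
  have := hbox l
  by_cases hl : l = j
  · subst hl
    simp only [Pi.sub_apply, Pi.single_eq_same, tsub_le_iff_right] at this
    omega
  · simpa [hl] using this

theorem support_sl2F_pow_subset {k s : ℕ} {c : (Fin d → ℕ) → ℝ}
    (hc : Function.support c ⊆ boxLevel k s) (m : ℕ) :
    Function.support ((sl2F d k ^ m) c) ⊆ boxLevel k (s + m) := by
  induction m with
  | zero => simpa using hc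
  | succ m ih => rw [pow_succ', Module.End.mul_apply, ← add_assoc]; exact support_sl2F_subset ih

theorem lie_sl2E_sl2F_of_support {k s : ℕ} {c : (Fin d → ℕ) → ℝ}
    (hc : Function.support c ⊆ boxLevel k s) :
    ⁅sl2E d, sl2F d k⁆ c = ((d * k : ℝ) - 2 * s) • c := by
  ext a
  rw [lie_sl2E_sl2F_apply, Pi.smul_apply, smul_eq_mul]
  by_cases ha : c a = 0
  · simp [ha]
  · rw [← (hc ha).1]; push_cast; rfl

theorem sum_add_indicator (a : Fin d → ℕ) (S : Finset (Fin d)) :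
    ∑ i, (a + fun j => if j ∈ S then 1 else 0 : Fin d → ℕ) i = ∑ i, a i + #S := by
  simp [sum_add_distrib]

theorem sum_add_single_eq_zero {c : (Fin d → ℕ) → ℝ}
    (hrel : ∀ a, ∑ S : Finset (Fin d), c (a + fun j => if j ∈ S then 1 else 0) = c a)
    (a : Fin d → ℕ) (hhigh : ∀ b, ∑ i, a i + 2 ≤ ∑ i, b i → c b = 0) :
    ∑ j, c (a + Pi.single j 1) = 0 := by
  have hrel := hrel a
  -- subsets with two or more elements land at level `|a| + 2` or above
  rw [← sum_subset (subset_univ (insert ∅ (univ.image ({·})))), sum_insert, sum_image] at hrel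
  · have hsingle : ∀ j, (fun i => if i = j then 1 else 0 : Fin d → ℕ) = Pi.single j 1 :=
      fun j => by ext i; simp [Pi.single_apply]
    simp only [notMem_empty, if_false, mem_singleton, hsingle] at hrel
    rw [← Pi.zero_def, add_zero] at hrel
    linarith
  · exact fun _ _ _ _ h => singleton_injective h
  · simp
  · intro S _ hS
    apply hhigh
    rw [sum_add_indicator]
    have h0 : #S ≠ 0 := by rintro h; simp_all
    have h1 : #S ≠ 1 := by rintro h; obtain ⟨j, rfl⟩ := card_eq_one.mp h; simp at hS
    omega

theorem sl2E_indicator_level_eq_zero {c : (Fin d → ℕ) → ℝ}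
    (hrel : ∀ a, ∑ S : Finset (Fin d), c (a + fun j => if j ∈ S then 1 else 0) = c a)
    {s : ℕ} (hhigh : ∀ b, s < ∑ i, b i → c b = 0) :
    sl2E d ({b | ∑ i, b i = s}.indicator c) = 0 := by
  ext a
  rw [sl2E_apply, Pi.zero_apply]
  by_cases ha : ∑ i, a i + 1 = s
  · rw [← sum_add_single_eq_zero hrel a fun b hb => hhigh b (by omega)]
    refine sum_congr rfl fun j _ => Set.indicator_of_mem ?_ c
    show _ = s
    rw [sum_add_single, ha]
  · refine sum_eq_zero fun j _ => Set.indicator_of_notMem ?_ c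
    show ¬_ = s
    rwa [sum_add_single]

theorem eq_zero_of_level_of_vanish_above {k : ℕ} {c : (Fin d → ℕ) → ℝ}
    (hbox : ∀ a j, k < a j → c a = 0)
    (hrel : ∀ a, ∑ S : Finset (Fin d), c (a + fun j => if j ∈ S then 1 else 0) = c a)
    {s : ℕ} (hs : d * k < 2 * s) (hhigh : ∀ b, s < ∑ i, b i → c b = 0)
    {a : Fin d → ℕ} (ha : ∑ i, a i = s) : c a = 0 := by
  set v := {b : Fin d → ℕ | ∑ i, b i = s}.indicator c
  have hv : Function.support v ⊆ boxLevel k s := by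
    intro b hb
    rw [Function.mem_support, Set.indicator_apply_ne_zero] at hb
    exact ⟨hb.1, fun j => not_lt.mp fun hj => hb.2 (hbox b j hj)⟩
  have hzero : v = 0 := by
    refine Module.End.eq_zero_of_highest_weight_neg (f := sl2F d k) (w := d * k - 2 * s) ?_
      (sl2E_indicator_level_eq_zero hrel hhigh) (fun m => ?_) (M := d * k + 1) ?_
    · exact_mod_cast (by omega : (d * k : ℤ) - 2 * s < 0)
    · rw [lie_sl2E_sl2F_of_support (support_sl2F_pow_subset hv m)]
      congr 1
      push_cast
      ring
    · rw [← Function.support_eq_empty_iff, ← Set.subset_empty_iff,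
        ← boxLevel_eq_empty (by omega : d * k < s + (d * k + 1))]
      exact support_sl2F_pow_subset hv _
  simpa [v, ha] using congrFun hzero a

theorem eq_zero_of_mul_lt_two_mul_sum {k : ℕ} {c : (Fin d → ℕ) → ℝ}
    (hbox : ∀ a j, k < a j → c a = 0)
    (hrel : ∀ a, ∑ S : Finset (Fin d), c (a + fun j => if j ∈ S then 1 else 0) = c a)
    {a : Fin d → ℕ} (ha : d * k < 2 * ∑ i, a i) : c a = 0 := by
  suffices h : ∀ t a, d * k < 2 * ∑ i, a i → d * k < ∑ i, a i + t → c a = 0 from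
    h (d * k + 1) a ha (by omega)
  intro t
  induction t with
  | zero =>
    intro a _ ha
    obtain ⟨j, hj⟩ : ∃ j, k < a j := by
      by_contra! h
      have ha' : a ∈ boxLevel k (∑ i, a i) := ⟨rfl, h⟩
      rwa [boxLevel_eq_empty (by omega)] at ha'
    exact hbox a j hj
  | succ t ih =>
    intro a ha _
    exact eq_zero_of_level_of_vanish_above hbox hrel ha (fun b hb => ih b (by omega) (by omega)) rfl

end Sl2TensorPower

namespace Polynomial

theorem exists_natDegree_le_eval_eq_choose (m : ℕ) :
    ∃ q : ℝ[X], q.natDegree ≤ m ∧ ∀ n : ℕ, q.eval (n : ℝ) = n.choose m := by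
  refine ⟨C (m.factorial : ℝ)⁻¹ * descPochhammer ℝ m, ?_, fun n => ?_⟩
  · exact (natDegree_C_mul_le _ _).trans (descPochhammer_natDegree ℝ m).le
  · rw [eval_mul, eval_C, Nat.cast_choose_eq_descPochhammer_div, div_eq_inv_mul]

theorem exists_natDegree_le_eval_eq_sum_prod_choose {α ι : Type*} [Fintype ι] (s : Finset α)
    (c : α → ℝ) (m : α → ι → ℕ) (D : ℕ) (hD : ∀ r ∈ s, c r ≠ 0 → ∑ j, m r j ≤ D) :
    ∃ P : ℝ[X], P.natDegree ≤ D ∧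
      ∀ n : ℕ, ∑ r ∈ s, (∏ j, (n.choose (m r j) : ℝ)) * c r = P.eval (n : ℝ) := by
  choose q hq_deg hq_eval using exists_natDegree_le_eval_eq_choose
  refine ⟨∑ r ∈ s, C (c r) * ∏ j, q (m r j), natDegree_sum_le_of_forall_le _ _ fun r hr => ?_,
    fun n => ?_⟩
  · by_cases hc : c r = 0
    · simp [hc]
    calc (C (c r) * ∏ j, q (m r j)).natDegree
        ≤ ∑ j, (q (m r j)).natDegree := (natDegree_C_mul_le _ _).trans (natDegree_prod_le _ _)
      _ ≤ ∑ j, m r j := sum_le_sum fun j _ => hq_deg _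
      _ ≤ D := hD r hr hc
  · simp [eval_finsetSum, eval_prod, hq_eval, mul_comm]

end Polynomial

theorem MultilinearMap.sum_map_pow_add_indicator {R ι M : Type*} [CommSemiring R] [Fintype ι]
    [DecidableEq ι] [AddCommMonoid M] [Module R M] {μ : MultilinearMap R (fun _ : ι => M) R}
    {N : Module.End R M} (hinv : ∀ v : ι → M, μ (fun j => (1 + N) (v j)) = μ v)
    (a : ι → ℕ) (H : M) :
    ∑ S : Finset ι, μ (fun j => (N ^ (a j + if j ∈ S then 1 else 0)) H) =
      μ (fun j => (N ^ a j) H) := by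
  have hsplit : (fun j => (1 + N) ((N ^ a j) H)) =
      (fun j => (N ^ (a j + 1)) H) + fun j => (N ^ a j) H := by
    ext j; simp [pow_succ', add_comm]
  rw [← hinv, hsplit, map_add_univ]
  refine sum_congr rfl fun S _ => congrArg μ (funext fun j => ?_)
  by_cases hj : j ∈ S <;> simp [hj]

theorem plov_degree_bound_general (V : Type*) [AddCommGroup V] [Module ℝ V]
    (d k : ℕ) (hk : Even k)
    (μ : MultilinearMap ℝ (fun _ : Fin d => V) ℝ)
    (N : Module.End ℝ V) (hN : N ^ (k + 1) = 0)
    (hinv : ∀ v : Fin d → V, μ (fun j => (1 + N) (v j)) = μ v)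
    (H : V) :
    ∃ P : Polynomial ℝ, P.natDegree ≤ (k / 2 + 1) * d ∧
      ∀ n : ℕ,
        μ (fun _ => ∑ i ∈ Finset.range (k + 1),
            (n.choose (i + 1) : ℝ) • (N ^ i) H) = P.eval (n : ℝ) := by
  classical
  set c : (Fin d → ℕ) → ℝ := fun a => μ (fun j => (N ^ a j) H)
  have hbox : ∀ a j, k < a j → c a = 0 := fun a j hj =>
    μ.map_coord_zero j (by rw [pow_eq_zero_of_le hj hN, LinearMap.zero_apply])
  have hvanish : ∀ a, d * k < 2 * ∑ j, a j → c a = 0 := fun _ =>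
    Sl2TensorPower.eq_zero_of_mul_lt_two_mul_sum hbox (μ.sum_map_pow_add_indicator hinv · H)
  have hdeg : ∀ r, c r ≠ 0 → ∑ j, (r j + 1) ≤ (k / 2 + 1) * d := fun r hr => by
    have hr := not_lt.mp (mt (hvanish r) hr)
    obtain ⟨m, rfl⟩ := hk
    have hm : (m + m) / 2 = m := by omega
    simp only [sum_add_distrib, sum_const, card_univ, Fintype.card_fin, smul_eq_mul, mul_one, hm]
    nlinarith
  obtain ⟨P, hP, hPeval⟩ := Polynomial.exists_natDegree_le_eval_eq_sum_prod_choose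
    (Fintype.piFinset fun _ => range (k + 1)) c (fun r j => r j + 1) _ fun r _ => hdeg r
  refine ⟨P, hP, fun n => ?_⟩
  rw [μ.map_sum_finset, ← hPeval]
  simp_rw [μ.map_smul_univ, smul_eq_mul, c]

/-- If `μ` is a symmetric `d`-multilinear form invariant under `g = 1 + N` with
`N^(k+1) = 0` (`k` even), then `n ↦ μ(Δ_n, …, Δ_n)`, where
`Δ_n = ∑_{i=0}^{k} C(n,i+1) • N^i H`, is a polynomial function of `n` of degree
at most `(k/2 + 1)·d`. -/
theorem plov_degree_bound (V : Type*) [AddCommGroup V] [Module ℝ V]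
    (d k : ℕ) (hd : 1 ≤ d) (hk : Even k)
    (μ : MultilinearMap ℝ (fun _ : Fin d => V) ℝ)
    (hsymm : ∀ (σ : Equiv.Perm (Fin d)) (v : Fin d → V), μ (v ∘ σ) = μ v)
    (N : Module.End ℝ V) (hN : N ^ (k + 1) = 0)
    (hinv : ∀ v : Fin d → V, μ (fun j => (1 + N) (v j)) = μ v)
    (H : V) :
    ∃ P : Polynomial ℝ, P.natDegree ≤ (k / 2 + 1) * d ∧
      ∀ n : ℕ,
        μ (fun _ => ∑ i ∈ Finset.range (k + 1),
            (n.choose (i + 1) : ℝ) • (N ^ i) H) = P.eval (n : ℝ) :=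
  plov_degree_bound_general V d k hk μ N hN hinv H
end
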